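/- arXiv:1208.3586 — 2 statements merged into one kernel-verified Lean document; each statement's English description precedes it below -/
import Mathlib

section
/- Let $p\neq q$ be fixed. For every even $m$, $\Psi_q(\widehat{\omega}_{p,q}^{m}) = \sum_{\pi\in\mathcal{NC}_m^2} b_{p,q}^{|\mathcal{B}_o(\pi)|}\, b_{q,p}^{|\mathcal{B}_e(\pi)|}$, where $\mathcal{B}_o(\pi)$ and $\mathcal{B}_e(\pi)$ are the sets of blocks of $\pi$ of odd and even depth respectively; odd moments vanish. In particular, if $(b_{p,q},b_{q,p})=(d_p,d_q)$ then $\Psi_q(\widehat{\omega}_{p,q}^6)=d_p^3+3d_p^2 d_q+d_p d_q^2$. -/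
open ContinuousLinearMap

/-- Basis-index test for nontrivial action of `℘_{p,q}` (see statement 6). -/
def actsOn {r : ℕ} (q : Fin r) (x : Fin r × List (Fin r)) : Bool :=
  match x.2 with
  | [] => x.1 == q
  | a :: _ => a == q

/-- `f` encodes a noncrossing pair partition of `[m]`. -/
def IsNCPairing {m : ℕ} (f : Fin m → Fin m) : Prop :=
  (∀ i, f (f i) = i) ∧ (∀ i, f i ≠ i) ∧
  ∀ i j : Fin m, i < j → j < f i → f i < f j → False

instance {m : ℕ} : DecidablePred (IsNCPairing (m := m)) := fun f => by
  unfold IsNCPairing; infer_instance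

/-- Left legs of the blocks of a pairing. -/
def leftLegs {m : ℕ} (f : Fin m → Fin m) : Finset (Fin m) :=
  Finset.univ.filter (fun i => i < f i)

/-- The depth of the block with left leg `l`: the number of blocks strictly nesting it. -/
def blockDepth {m : ℕ} (f : Fin m → Fin m) (l : Fin m) : ℕ :=
  (Finset.univ.filter (fun j => j < f j ∧ j < l ∧ f l < f j)).card

/-- Blocks (identified with their left legs) of even depth `0,2,4,…`. -/
def evenDepthBlocks {m : ℕ} (f : Fin m → Fin m) : Finset (Fin m) :=
  (leftLegs f).filter (fun l => Even (blockDepth f l))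

/-- Blocks of odd depth `1,3,…`. -/
def oddDepthBlocks {m : ℕ} (f : Fin m → Fin m) : Finset (Fin m) :=
  (leftLegs f).filter (fun l => ¬ Even (blockDepth f l))

/-!
The vacuum orbit of `ω̂_{p,q}` is spanned by the orthonormal vectors `e (q, w n)`, where `w n`
is the alternating word `… q p` of length `n`, and `ω̂_{p,q}` acts on them as a Jacobi
matrix with off-diagonal entries `√b_{p,q}, √b_{q,p}, √b_{p,q}, …`. Hence the `m`-th moment is
a sum over Dyck paths of length `m` in which an up step leaving height `n` weighs `b_{p,q}` or
`b_{q,p}` according to the parity of `n`. Matching each up step with the first return to its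
level turns Dyck paths into noncrossing pair partitions, and the height at which a block opens
is its depth.
-/

theorem exists_eq_of_upcrossing {h : ℕ → ℤ} (hstep : ∀ k, h (k + 1) ≤ h k + 1)
    {v : ℤ} {a c : ℕ} (hac : a ≤ c) (ha : h a ≤ v) (hc : v < h c) :
    ∃ k, a ≤ k ∧ k < c ∧ h k = v := by
  induction c, hac using Nat.le_induction with
  | base => omega
  | succ c hac ih =>
    by_cases hcv : v < h c
    · obtain ⟨k, hak, hkc, hk⟩ := ih hcv
      exact ⟨k, hak, by omega, hk⟩
    · exact ⟨c, hac, by omega, by linarith [hstep c]⟩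

theorem exists_eq_of_downcrossing {h : ℕ → ℤ} (hstep : ∀ k, h k - 1 ≤ h (k + 1))
    {v : ℤ} {a c : ℕ} (hac : a ≤ c) (ha : v < h a) (hc : h c ≤ v) :
    ∃ k, a < k ∧ k ≤ c ∧ h k = v := by
  induction c, hac using Nat.le_induction with
  | base => omega
  | succ c hac ih =>
    by_cases hcv : h c ≤ v
    · obtain ⟨k, hak, hkc, hk⟩ := ih hcv
      exact ⟨k, hak, by omega, hk⟩
    · exact ⟨c + 1, by omega, le_rfl, by linarith [hstep c]⟩

namespace BoolWalk

variable {m : ℕ}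

def step (b : Bool) : ℤ := if b then 1 else -1

def height (s : Fin m → Bool) (k : ℕ) : ℤ :=
  ∑ i : Fin m, if (i : ℕ) < k then step (s i) else 0

@[simp]
theorem height_zero (s : Fin m → Bool) : height s 0 = 0 := by
  simp [height]

theorem height_succ (s : Fin m → Bool) (k : ℕ) :
    height s (k + 1) = height s k + if h : k < m then step (s ⟨k, h⟩) else 0 := by
  have hsplit : ∀ i : Fin m, (if (i : ℕ) < k + 1 then step (s i) else 0) =
      (if (i : ℕ) < k then step (s i) else 0) + if (i : ℕ) = k then step (s i) else 0 := by
    intro i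
    by_cases h₁ : (i : ℕ) < k <;> by_cases h₂ : (i : ℕ) = k <;> simp [h₁, h₂] <;> omega
  rw [height, Finset.sum_congr rfl fun i _ => hsplit i, Finset.sum_add_distrib, ← height]
  congr 1
  split_ifs with hk
  · rw [Finset.sum_eq_single ⟨k, hk⟩ (fun i _ hi => if_neg fun h => hi (Fin.ext h))
      (by simp), if_pos rfl]
  · exact Finset.sum_eq_zero fun i _ => if_neg (by omega)

theorem height_val_add_one (s : Fin m → Bool) (i : Fin m) :
    height s (i + 1) = height s i + step (s i) := by
  rw [height_succ, dif_pos i.isLt]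

theorem height_succ_le (s : Fin m → Bool) (k : ℕ) : height s (k + 1) ≤ height s k + 1 := by
  rw [height_succ]; unfold step; split_ifs <;> omega

theorem height_sub_one_le (s : Fin m → Bool) (k : ℕ) : height s k - 1 ≤ height s (k + 1) := by
  rw [height_succ]; unfold step; split_ifs <;> omega

theorem height_cons (b : Bool) (t : Fin m → Bool) (k : ℕ) :
    height (Fin.cons b t : Fin (m + 1) → Bool) (k + 1) = step b + height t k := by
  simp [height, Fin.sum_univ_succ]

theorem height_eq_card_sub_card (s : Fin m → Bool) (k : ℕ) :
    height s k = ((Finset.univ.filter fun i : Fin m => (i : ℕ) < k ∧ s i = true).card : ℤ) -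
      (Finset.univ.filter fun i : Fin m => (i : ℕ) < k ∧ s i = false).card := by
  simp only [height, step, Finset.card_filter, Nat.cast_sum, ← Finset.sum_sub_distrib]
  refine Finset.sum_congr rfl fun i _ => ?_
  cases s i <;> split_ifs <;> simp_all

def IsDyckFrom (n : ℕ) (s : Fin m → Bool) : Prop :=
  (∀ k ≤ m, 0 ≤ n + height s k) ∧ n + height s m = 0

instance (n : ℕ) : DecidablePred (IsDyckFrom (m := m) n) := fun s => by
  unfold IsDyckFrom; infer_instance

section Partner

variable {s : Fin m → Bool} {i : Fin m}

def upPartners (s : Fin m → Bool) (i : Fin m) : Finset (Fin m) :=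
  Finset.univ.filter fun j => i < j ∧ height s (j + 1) = height s i

def downPartners (s : Fin m → Bool) (i : Fin m) : Finset (Fin m) :=
  Finset.univ.filter fun j => j < i ∧ height s j = height s (i + 1)

/-- The step matched with `i`: the first return to the level of an up step `i`, or the last
departure from the level reached by a down step `i`. -/
def partner (s : Fin m → Bool) (i : Fin m) : Fin m :=
  if s i then (if h : (upPartners s i).Nonempty then (upPartners s i).min' h else i)
  else (if h : (downPartners s i).Nonempty then (downPartners s i).max' h else i)

theorem upPartners_nonempty (hs : IsDyckFrom 0 s) (hi : s i = true) :
    (upPartners s i).Nonempty := by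
  have hup := height_val_add_one s i
  have h₀ : 0 ≤ height s i := by simpa using hs.1 i i.isLt.le
  obtain ⟨k, hik, hkm, hk⟩ := exists_eq_of_downcrossing (height_sub_one_le s) i.isLt
    (v := height s i) (by simp [hup, hi, step]) (by simpa using hs.2.le.trans h₀)
  refine ⟨⟨k - 1, by omega⟩, ?_⟩
  simp only [upPartners, Finset.mem_filter, Finset.mem_univ, true_and, Fin.lt_def]
  exact ⟨by omega, by rw [show k - 1 + 1 = k by omega, hk]⟩

theorem downPartners_nonempty (hs : IsDyckFrom 0 s) (hi : s i = false) :
    (downPartners s i).Nonempty := by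
  have hup := height_val_add_one s i
  have h₀ : 0 ≤ height s (i + 1) := by simpa using hs.1 (i + 1) i.isLt
  obtain ⟨k, -, hki, hk⟩ := exists_eq_of_upcrossing (height_succ_le s) (Nat.zero_le i)
    (v := height s (i + 1)) (by simpa using h₀) (by simp [hup, hi, step])
  refine ⟨⟨k, by omega⟩, ?_⟩
  simp only [downPartners, Finset.mem_filter, Finset.mem_univ, true_and, Fin.lt_def]
  exact ⟨hki, hk⟩

theorem partner_eq_min' (hs : IsDyckFrom 0 s) (hi : s i = true) :
    partner s i = (upPartners s i).min' (upPartners_nonempty hs hi) := by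
  rw [partner, if_pos hi, dif_pos (upPartners_nonempty hs hi)]

theorem partner_eq_max' (hs : IsDyckFrom 0 s) (hi : s i = false) :
    partner s i = (downPartners s i).max' (downPartners_nonempty hs hi) := by
  rw [partner, hi, if_neg Bool.false_ne_true, dif_pos (downPartners_nonempty hs hi)]

theorem partner_mem_upPartners (hs : IsDyckFrom 0 s) (hi : s i = true) :
    partner s i ∈ upPartners s i :=
  partner_eq_min' hs hi ▸ Finset.min'_mem _ _

theorem partner_mem_downPartners (hs : IsDyckFrom 0 s) (hi : s i = false) :
    partner s i ∈ downPartners s i :=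
  partner_eq_max' hs hi ▸ Finset.max'_mem _ _

theorem lt_partner (hs : IsDyckFrom 0 s) (hi : s i = true) : i < partner s i :=
  (Finset.mem_filter.1 (partner_mem_upPartners hs hi)).2.1

theorem height_partner_succ (hs : IsDyckFrom 0 s) (hi : s i = true) :
    height s (partner s i + 1) = height s i :=
  (Finset.mem_filter.1 (partner_mem_upPartners hs hi)).2.2

theorem partner_lt (hs : IsDyckFrom 0 s) (hi : s i = false) : partner s i < i :=
  (Finset.mem_filter.1 (partner_mem_downPartners hs hi)).2.1

theorem height_partner (hs : IsDyckFrom 0 s) (hi : s i = false) :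
    height s (partner s i) = height s (i + 1) :=
  (Finset.mem_filter.1 (partner_mem_downPartners hs hi)).2.2

theorem partner_le (hs : IsDyckFrom 0 s) (hi : s i = true) {j : Fin m} (hij : i < j)
    (hj : height s (j + 1) = height s i) : partner s i ≤ j :=
  partner_eq_min' hs hi ▸ Finset.min'_le _ _ (by simp [upPartners, hij, hj])

theorem le_partner (hs : IsDyckFrom 0 s) (hi : s i = false) {j : Fin m} (hji : j < i)
    (hj : height s j = height s (i + 1)) : j ≤ partner s i :=
  partner_eq_max' hs hi ▸ Finset.le_max' _ _ (by simp [downPartners, hji, hj])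

theorem height_lt_of_lt_of_le_partner (hs : IsDyckFrom 0 s) (hi : s i = true) {l : ℕ}
    (hil : i < l) (hl : l ≤ partner s i) : height s i < height s l := by
  by_contra! hle
  have hup := height_val_add_one s i
  obtain ⟨k, hik, hkl, hk⟩ := exists_eq_of_downcrossing (height_sub_one_le s) hil
    (v := height s i) (by simp [hup, hi, step]) hle
  have := partner_le hs hi (j := ⟨k - 1, by omega⟩) (Fin.lt_def.2 (by simp; omega))
    (by simp only; rw [show k - 1 + 1 = k by omega, hk])
  rw [Fin.le_def] at this
  simp only at this
  omega

theorem height_lt_of_partner_lt_of_le (hs : IsDyckFrom 0 s) (hi : s i = false) {l : ℕ}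
    (hl : partner s i < l) (hli : l ≤ i) : height s (i + 1) < height s l := by
  by_contra! hle
  have hup := height_val_add_one s i
  obtain ⟨k, hlk, hki, hk⟩ := exists_eq_of_upcrossing (height_succ_le s) hli
    (v := height s (i + 1)) hle (by simp [hup, hi, step])
  have := le_partner hs hi (j := ⟨k, by omega⟩) (Fin.lt_def.2 hki) hk
  rw [Fin.le_def] at this
  simp only at this
  omega

theorem apply_partner_eq_false (hs : IsDyckFrom 0 s) (hi : s i = true) :
    s (partner s i) = false := by
  by_contra! h
  have hup := height_val_add_one s (partner s i)
  have := height_lt_of_lt_of_le_partner hs hi (lt_partner hs hi) le_rfl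
  simp only [Bool.not_eq_false] at h
  simp [h, step, height_partner_succ hs hi] at hup
  omega

theorem apply_partner_eq_true (hs : IsDyckFrom 0 s) (hi : s i = false) :
    s (partner s i) = true := by
  by_contra! h
  have hup := height_val_add_one s (partner s i)
  have := height_lt_of_partner_lt_of_le hs hi (l := partner s i + 1) (by simp)
    (partner_lt hs hi)
  simp only [Bool.not_eq_true] at h
  simp [h, step, height_partner hs hi] at hup
  omega

theorem partner_partner (hs : IsDyckFrom 0 s) (i : Fin m) : partner s (partner s i) = i := by
  cases hi : s i
  · have hj := apply_partner_eq_true hs hi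
    have hj' := lt_partner hs hj
    refine le_antisymm (partner_le hs hj (partner_lt hs hi) (by rw [height_partner hs hi]))
      (not_lt.1 fun hlt => ?_)
    have := height_lt_of_partner_lt_of_le hs hi (l := partner s (partner s i) + 1)
      (by rw [Fin.lt_def] at hj'; omega) hlt
    rw [height_partner_succ hs hj, height_partner hs hi] at this
    exact lt_irrefl _ this
  · have hj := apply_partner_eq_false hs hi
    refine le_antisymm (not_lt.1 fun hlt => ?_)
      (le_partner hs hj (lt_partner hs hi) (by rw [height_partner_succ hs hi]))
    have := height_lt_of_lt_of_le_partner hs hi hlt (partner_lt hs hj).le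
    rw [height_partner hs hj, height_partner_succ hs hi] at this
    exact lt_irrefl _ this

theorem lt_partner_iff (hs : IsDyckFrom 0 s) : i < partner s i ↔ s i = true := by
  refine ⟨fun h => ?_, lt_partner hs⟩
  by_contra! hi
  exact lt_asymm h (partner_lt hs (Bool.not_eq_true _ ▸ hi))

theorem isNCPairing_partner (hs : IsDyckFrom 0 s) : IsNCPairing (partner s) := by
  refine ⟨partner_partner hs, fun i => ?_, fun i j hij hji hij' => ?_⟩
  · cases hi : s i
    · exact (partner_lt hs hi).ne
    · exact (lt_partner hs hi).ne'
  · have hi := (lt_partner_iff hs).1 (hij.trans hji)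
    have hj := (lt_partner_iff hs).1 (hji.trans hij')
    have h₁ := height_lt_of_lt_of_le_partner hs hi hij hji.le
    have h₂ := height_lt_of_lt_of_le_partner hs hj (l := partner s i + 1)
      (by rw [Fin.lt_def] at hji; omega) hij'
    rw [height_partner_succ hs hi] at h₂
    exact lt_asymm h₁ h₂

end Partner

end BoolWalk

open BoolWalk

section PairingWalk

variable {m : ℕ} {f : Fin m → Fin m}

def pairingWalk (f : Fin m → Fin m) (i : Fin m) : Bool := decide (i < f i)

def openBlocks (f : Fin m → Fin m) (k : ℕ) : Finset (Fin m) :=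
  Finset.univ.filter fun j => (j : ℕ) < k ∧ j < f j ∧ k ≤ (f j : ℕ)

theorem height_pairingWalk (hinv : Function.Involutive f) (hne : ∀ i, f i ≠ i) (k : ℕ) :
    height (pairingWalk f) k = (openBlocks f k).card := by
  -- The up steps before `k` are the blocks still open at `k` and those already closed;
  -- `f` maps the closed blocks onto the down steps before `k`.
  set closed := Finset.univ.filter fun j : Fin m => j < f j ∧ (f j : ℕ) < k
  have hup : (Finset.univ.filter fun i : Fin m => (i : ℕ) < k ∧ pairingWalk f i = true).card =
      (openBlocks f k).card + closed.card := by
    rw [← Finset.card_filter_add_card_filter_not (p := fun j => k ≤ (f j : ℕ))]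
    congr 2 <;> ext j <;>
      simp only [openBlocks, closed, pairingWalk, Finset.mem_filter, Finset.mem_univ,
        true_and, decide_eq_true_eq, Fin.lt_def] <;> omega
  have hdown : (Finset.univ.filter fun i : Fin m => (i : ℕ) < k ∧ pairingWalk f i = false).card =
      closed.card := by
    refine Finset.card_nbij' f f (fun i hi => ?_) (fun i hi => ?_)
      (fun i _ => hinv i) (fun i _ => hinv i)
    all_goals
      simp only [closed, pairingWalk, Finset.coe_filter, Finset.mem_univ, true_and,
        Set.mem_ofPred_eq, decide_eq_false_iff_not, not_lt, hinv _] at hi ⊢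
      have := hne i
      have := hne (f i)
      rw [hinv] at this
      simp only [Fin.lt_def, Fin.le_def, ne_eq, Fin.ext_iff] at *
      omega
  rw [height_eq_card_sub_card, hup, hdown]
  push_cast
  ring

theorem isDyckFrom_zero_pairingWalk (hf : IsNCPairing f) : IsDyckFrom 0 (pairingWalk f) := by
  refine ⟨fun k _ => by simp [height_pairingWalk hf.1 hf.2.1], ?_⟩
  rw [height_pairingWalk hf.1 hf.2.1, Finset.card_eq_zero.2]
  · simp
  · exact Finset.filter_false_of_mem fun j _ ⟨_, _, h⟩ => by omega

theorem lt_of_mem_openBlocks (hf : IsNCPairing f) {l j : Fin m} (hl : l < f l)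
    (hj : j ∈ openBlocks f l) : f l < f j := by
  simp only [openBlocks, Finset.mem_filter, Finset.mem_univ, true_and] at hj
  obtain ⟨hjl, hjf, hlf⟩ := hj
  have hjl : j < l := Fin.lt_def.2 hjl
  have hfjl : f j ≠ l := fun h => by
    rw [← h, hf.1] at hl
    exact lt_asymm hl hjf
  rcases lt_trichotomy (f l) (f j) with h | h | h
  · exact h
  · exact absurd (by rw [← hf.1 l, h, hf.1]) hjl.ne
  · exact (hf.2.2 j l hjl (lt_of_le_of_ne (Fin.le_def.2 hlf) hfjl.symm) h).elim

theorem openBlocks_eq_filter_nesting (hf : IsNCPairing f) {l : Fin m} (hl : l < f l) :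
    openBlocks f l = Finset.univ.filter fun j => j < f j ∧ j < l ∧ f l < f j := by
  ext j
  refine ⟨fun hj => ?_, fun hj => ?_⟩
  · have := lt_of_mem_openBlocks hf hl hj
    simp only [openBlocks, Finset.mem_filter, Finset.mem_univ, true_and] at hj ⊢
    exact ⟨hj.2.1, Fin.lt_def.2 hj.1, this⟩
  · simp only [openBlocks, Finset.mem_filter, Finset.mem_univ, true_and, Fin.lt_def] at hj ⊢
    omega

theorem openBlocks_succ_right (hf : IsNCPairing f) {l : Fin m} (hl : l < f l) :
    openBlocks f (f l + 1) = openBlocks f l := by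
  ext j
  refine ⟨fun hj => ?_, fun hj => ?_⟩
  · simp only [openBlocks, Finset.mem_filter, Finset.mem_univ, true_and] at hj ⊢
    obtain ⟨h₁, h₂, h₃⟩ := hj
    have hlj : f l < f j := Fin.lt_def.2 h₃
    have hjl : j < l := by
      by_contra! hlj'
      rcases hlj'.lt_or_eq with hlj' | rfl
      · refine hf.2.2 l j hlj' (lt_of_le_of_ne (Fin.le_def.2 (by omega)) fun h => ?_) hlj
        rw [h, hf.1] at h₂
        exact lt_asymm h₂ hl
      · exact lt_irrefl _ hlj
    rw [Fin.lt_def] at hl hjl hlj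
    omega
  · have := lt_of_mem_openBlocks hf hl hj
    simp only [openBlocks, Finset.mem_filter, Finset.mem_univ, true_and, Fin.lt_def] at hj hl this ⊢
    omega

theorem card_openBlocks_lt (hf : IsNCPairing f) {l : Fin m} (hl : l < f l) {j : ℕ}
    (hlj : l < j) (hjl : j < f l) : (openBlocks f l).card < (openBlocks f (j + 1)).card := by
  refine Finset.card_lt_card ⟨fun i hi => ?_, fun h => ?_⟩
  · have := lt_of_mem_openBlocks hf hl hi
    simp only [openBlocks, Finset.mem_filter, Finset.mem_univ, true_and, Fin.lt_def] at hi this ⊢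
    omega
  · have := h (show l ∈ openBlocks f (j + 1) by
      simp only [openBlocks, Finset.mem_filter, Finset.mem_univ, true_and, Fin.lt_def] at hl ⊢
      omega)
    simp [openBlocks] at this

theorem partner_pairingWalk_of_lt (hf : IsNCPairing f) {i : Fin m} (hi : i < f i) :
    partner (pairingWalk f) i = f i := by
  have hs := isDyckFrom_zero_pairingWalk hf
  have hup : pairingWalk f i = true := decide_eq_true hi
  refine le_antisymm (partner_le hs hup hi ?_) (not_lt.1 fun hlt => ?_)
  · rw [height_pairingWalk hf.1 hf.2.1, height_pairingWalk hf.1 hf.2.1,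
      openBlocks_succ_right hf hi]
  · have := height_partner_succ hs hup
    rw [height_pairingWalk hf.1 hf.2.1, height_pairingWalk hf.1 hf.2.1, Nat.cast_inj] at this
    exact (card_openBlocks_lt hf hi (lt_partner hs hup) hlt).ne' this

theorem partner_pairingWalk (hf : IsNCPairing f) : partner (pairingWalk f) = f := by
  funext i
  rcases (hf.2.1 i).lt_or_gt with h | h
  · have hfi := partner_pairingWalk_of_lt hf (i := f i) (by rwa [hf.1])
    rw [hf.1] at hfi
    conv_lhs => rw [← hfi, partner_partner (isDyckFrom_zero_pairingWalk hf)]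
  · exact partner_pairingWalk_of_lt hf h

theorem pairingWalk_partner {s : Fin m → Bool} (hs : IsDyckFrom 0 s) :
    pairingWalk (partner s) = s := by
  funext i
  exact Bool.eq_iff_iff.2 <| (decide_eq_true_iff).trans (lt_partner_iff hs)

theorem blockDepth_eq_height (hf : IsNCPairing f) {l : Fin m} (hl : l < f l) :
    blockDepth f l = (height (pairingWalk f) l).toNat := by
  rw [height_pairingWalk hf.1 hf.2.1, Int.toNat_natCast, blockDepth,
    openBlocks_eq_filter_nesting hf hl]

end PairingWalk

namespace BoolWalk

variable {R : Type*} [CommSemiring R] {m : ℕ}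

def dyckWeight (lam : ℕ → R) (n : ℕ) (s : Fin m → Bool) : R :=
  ∏ i : Fin m, if s i then lam (n + height s i).toNat else 1

def dyckSum (lam : ℕ → R) (m n : ℕ) : R :=
  ∑ s ∈ Finset.univ.filter (IsDyckFrom (m := m) n), dyckWeight lam n s

theorem isDyckFrom_cons {b : Bool} {t : Fin m → Bool} {n n' : ℕ} (hn : (n' : ℤ) = n + step b) :
    IsDyckFrom n (Fin.cons b t : Fin (m + 1) → Bool) ↔ IsDyckFrom n' t := by
  simp only [IsDyckFrom]
  refine ⟨fun ⟨hpos, hend⟩ => ⟨fun k hk => ?_, ?_⟩, fun ⟨hpos, hend⟩ => ⟨fun k hk => ?_, ?_⟩⟩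
  · have := hpos (k + 1) (by omega)
    rw [height_cons] at this
    omega
  · rw [height_cons] at hend
    omega
  · cases k with
    | zero => simp
    | succ k =>
      have := hpos k (by omega)
      rw [height_cons]
      omega
  · rw [height_cons]
    omega

theorem not_isDyckFrom_zero_cons_false (t : Fin m → Bool) :
    ¬ IsDyckFrom 0 (Fin.cons false t : Fin (m + 1) → Bool) := fun h => by
  simpa [height_cons, step] using h.1 1 (by omega)

theorem dyckWeight_cons (lam : ℕ → R) {b : Bool} {t : Fin m → Bool} {n n' : ℕ}
    (hn : (n' : ℤ) = n + step b) :
    dyckWeight lam n (Fin.cons b t : Fin (m + 1) → Bool) =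
      (if b then lam n else 1) * dyckWeight lam n' t := by
  simp only [dyckWeight, Fin.prod_univ_succ, Fin.cons_zero, Fin.cons_succ, Fin.val_zero,
    Fin.val_succ, height_zero, height_cons]
  congr 1
  simp only [← add_assoc, ← hn]

theorem dyckSum_zero (lam : ℕ → R) (n : ℕ) : dyckSum lam 0 n = if n = 0 then 1 else 0 := by
  have hdyck : ∀ s : Fin 0 → Bool, IsDyckFrom n s ↔ n = 0 := fun s => by
    simp [IsDyckFrom, height]
  split_ifs with hn
  · rw [dyckSum, Finset.filter_true_of_mem fun s _ => (hdyck s).2 hn]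
    simp [dyckWeight]
  · rw [dyckSum, Finset.filter_false_of_mem fun s _ => mt (hdyck s).1 hn, Finset.sum_empty]

theorem dyckSum_succ_eq_sum_cons (lam : ℕ → R) (n : ℕ) :
    dyckSum lam (m + 1) n = ∑ b : Bool, ∑ t : Fin m → Bool,
      if IsDyckFrom n (Fin.cons b t : Fin (m + 1) → Bool)
      then dyckWeight lam n (Fin.cons b t : Fin (m + 1) → Bool) else 0 := by
  rw [dyckSum, Finset.sum_filter, ← Fintype.sum_prod_type']
  exact (Fintype.sum_equiv (Fin.consEquiv fun _ => Bool) _ _ fun _ => rfl).symm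

theorem sum_cons_eq_mul_dyckSum (lam : ℕ → R) (b : Bool) {n n' : ℕ}
    (hn : (n' : ℤ) = n + step b) :
    (∑ t : Fin m → Bool, if IsDyckFrom n (Fin.cons b t : Fin (m + 1) → Bool)
      then dyckWeight lam n (Fin.cons b t : Fin (m + 1) → Bool) else 0) =
      (if b then lam n else 1) * dyckSum lam m n' := by
  rw [dyckSum, Finset.sum_filter, Finset.mul_sum]
  refine Finset.sum_congr rfl fun t _ => ?_
  simp only [isDyckFrom_cons hn, dyckWeight_cons lam hn, mul_ite, mul_zero]

theorem dyckSum_succ_zero (lam : ℕ → R) : dyckSum lam (m + 1) 0 = lam 0 * dyckSum lam m 1 := by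
  rw [dyckSum_succ_eq_sum_cons, Fintype.sum_bool, sum_cons_eq_mul_dyckSum lam true (n' := 1)
    (by simp [step]), if_pos rfl]
  simp [not_isDyckFrom_zero_cons_false]

theorem dyckSum_succ_succ (lam : ℕ → R) (n : ℕ) :
    dyckSum lam (m + 1) (n + 1) = lam (n + 1) * dyckSum lam m (n + 2) + dyckSum lam m n := by
  rw [dyckSum_succ_eq_sum_cons, Fintype.sum_bool,
    sum_cons_eq_mul_dyckSum lam true (n' := n + 2) (by simp [step]; ring),
    sum_cons_eq_mul_dyckSum lam false (n' := n) (by simp [step]), if_pos rfl, if_neg (by simp),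
    one_mul]

theorem dyckSum_six (lam : ℕ → R) :
    dyckSum lam 6 0 = lam 0 * (lam 1 * (lam 2 + lam 1 + lam 0) + lam 0 * (lam 1 + lam 0)) := by
  simp [dyckSum_succ_zero, dyckSum_succ_succ, dyckSum_zero]
  ring

end BoolWalk

section PairingWeight

variable {R : Type*} [CommSemiring R] {m : ℕ}

def pairingWeight (lam : ℕ → R) (f : Fin m → Fin m) : R :=
  ∏ l ∈ leftLegs f, lam (blockDepth f l)

theorem pairingWeight_eq_dyckWeight (lam : ℕ → R) {f : Fin m → Fin m} (hf : IsNCPairing f) :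
    pairingWeight lam f = dyckWeight lam 0 (pairingWalk f) := by
  rw [pairingWeight, leftLegs, Finset.prod_filter]
  refine Finset.prod_congr rfl fun i _ => ?_
  by_cases h : i < f i
  · simp [pairingWalk, h, blockDepth_eq_height hf h]
  · simp [pairingWalk, h]

theorem sum_pairingWeight_eq_dyckSum (lam : ℕ → R) :
    ∑ π : {f : Fin m → Fin m // IsNCPairing f}, pairingWeight lam π.1 = dyckSum lam m 0 := by
  rw [dyckSum]
  refine Finset.sum_bij' (fun π _ => pairingWalk π.1)
    (fun s hs => ⟨partner s, isNCPairing_partner (Finset.mem_filter.1 hs).2⟩)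
    (fun π _ => Finset.mem_filter.2 ⟨Finset.mem_univ _, isDyckFrom_zero_pairingWalk π.2⟩)
    (fun _ _ => Finset.mem_univ _)
    (fun π _ => Subtype.ext (partner_pairingWalk π.2))
    (fun s hs => pairingWalk_partner (Finset.mem_filter.1 hs).2)
    (fun π _ => pairingWeight_eq_dyckWeight lam π.2)

def alternating {α : Type*} (x y : α) (n : ℕ) : α := if Even n then x else y

theorem pairingWeight_alternating (x y : R) (f : Fin m → Fin m) :
    pairingWeight (alternating x y) f =
      x ^ (evenDepthBlocks f).card * y ^ (oddDepthBlocks f).card := by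
  rw [pairingWeight, ← Finset.prod_filter_mul_prod_filter_not _ fun l => Even (blockDepth f l)]
  congr 1
  · exact (Finset.prod_congr rfl fun l hl => if_pos (Finset.mem_filter.1 hl).2).trans
      (Finset.prod_const _)
  · exact (Finset.prod_congr rfl fun l hl => if_neg (Finset.mem_filter.1 hl).2).trans
      (Finset.prod_const _)

end PairingWeight

section JacobiChain

variable {𝕜 H : Type*} [RCLike 𝕜] [NormedAddCommGroup H] [InnerProductSpace 𝕜 H]

theorem inner_pow_apply_of_jacobi {T : H →L[𝕜] H} (hT : (T : H →ₗ[𝕜] H).IsSymmetric)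
    {v : ℕ → H} (hv : Orthonormal 𝕜 v) {a : ℕ → ℝ}
    (h₀ : T (v 0) = (a 0 : 𝕜) • v 1)
    (hsucc : ∀ k, T (v (k + 1)) = (a (k + 1) : 𝕜) • v (k + 2) + (a k : 𝕜) • v k) (M k : ℕ) :
    inner 𝕜 (v k) ((T ^ M) (v 0)) =
      (((∏ j ∈ Finset.range k, a j) * dyckSum (fun j => a j ^ 2) M k : ℝ) : 𝕜) := by
  induction M generalizing k with
  | zero =>
    rw [pow_zero, one_apply_eq_self, orthonormal_iff_ite.1 hv, dyckSum_zero]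
    cases k <;> simp
  | succ M ih =>
    rw [pow_succ', mul_apply_eq_comp, ← coe_coe, ← hT, coe_coe]
    cases k with
    | zero =>
      rw [h₀, inner_smul_left, RCLike.conj_ofReal, ih, dyckSum_succ_zero]
      push_cast
      simp only [Finset.range_one, Finset.prod_singleton, Finset.range_zero, Finset.prod_empty]
      ring
    | succ k =>
      rw [hsucc, inner_add_left, inner_smul_left, inner_smul_left, RCLike.conj_ofReal,
        RCLike.conj_ofReal, ih, ih, dyckSum_succ_succ, Finset.prod_range_succ,
        Finset.prod_range_succ]
      push_cast
      ring

end JacobiChain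

theorem Orthonormal.eq_of_forall_inner_eq {𝕜 H ι : Type*} [RCLike 𝕜] [NormedAddCommGroup H]
    [InnerProductSpace 𝕜 H] [CompleteSpace H] {e : ι → H} (he : Orthonormal 𝕜 e)
    (hdense : (Submodule.span 𝕜 (Set.range e)).topologicalClosure = ⊤) {x y : H}
    (h : ∀ i, inner 𝕜 (e i) x = inner 𝕜 (e i) y) : x = y := by
  set B := HilbertBasis.mk he hdense.ge
  refine B.repr.injective (lp.ext (funext fun i => ?_))
  simpa [B, HilbertBasis.repr_apply_apply] using h i

section CreationOperators

variable {H : Type} [NormedAddCommGroup H] [InnerProductSpace ℂ H] [CompleteSpace H]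
  {r : ℕ} {b : Fin r → Fin r → ℝ} {e : Fin r × List (Fin r) → H}
  {c : Fin r → Fin r → H →L[ℂ] H}

theorem adjoint_apply_nil (he : Orthonormal ℂ e)
    (hdense : (Submodule.span ℂ (Set.range e)).topologicalClosure = ⊤)
    (hc : ∀ i j x, c i j (e x) =
      if actsOn j x then (Real.sqrt (b i j) : ℂ) • e (x.1, i :: x.2) else 0)
    (i j s₀ : Fin r) :
    adjoint (c i j) (e (s₀, [])) = 0 := by
  refine he.eq_of_forall_inner_eq hdense fun z => ?_
  rw [adjoint_inner_right, hc, inner_zero_right]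
  split_ifs
  · rw [inner_smul_left, orthonormal_iff_ite.1 he, if_neg (by simp), mul_zero]
  · exact inner_zero_left _

theorem adjoint_apply_cons (he : Orthonormal ℂ e)
    (hdense : (Submodule.span ℂ (Set.range e)).topologicalClosure = ⊤)
    (hc : ∀ i j x, c i j (e x) =
      if actsOn j x then (Real.sqrt (b i j) : ℂ) • e (x.1, i :: x.2) else 0)
    (i j s₀ a : Fin r) (w : List (Fin r)) :
    adjoint (c i j) (e (s₀, a :: w)) =
      if a = i ∧ actsOn j (s₀, w) then (Real.sqrt (b i j) : ℂ) • e (s₀, w) else 0 := by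
  refine he.eq_of_forall_inner_eq hdense fun ⟨z₁, z₂⟩ => ?_
  rw [adjoint_inner_right, hc]
  split_ifs <;>
    simp only [inner_smul_left, inner_smul_right, inner_zero_left, inner_zero_right,
      orthonormal_iff_ite.1 he, Complex.conj_ofReal, Prod.mk.injEq, List.cons.injEq] <;>
    split_ifs <;> simp_all

end CreationOperators

section AlternatingChain

variable {r : ℕ} {p q : Fin r}

def altWord (p q : Fin r) : ℕ → List (Fin r)
  | 0 => []
  | n + 1 => alternating p q n :: altWord p q n

theorem length_altWord (p q : Fin r) (n : ℕ) : (altWord p q n).length = n := by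
  induction n <;> simp [altWord, *]

theorem actsOn_altWord_right (hpq : p ≠ q) (n : ℕ) :
    actsOn q (q, altWord p q n) = decide (Even n) := by
  cases n with
  | zero => simp [altWord, actsOn]
  | succ n =>
    by_cases hn : Even n <;> simp [altWord, actsOn, alternating, hn, hpq, Nat.even_add_one]

theorem actsOn_altWord_left (hpq : p ≠ q) (n : ℕ) :
    actsOn p (q, altWord p q n) = decide (¬ Even n) := by
  cases n with
  | zero => simp [altWord, actsOn, hpq.symm]
  | succ n =>
    by_cases hn : Even n <;> simp [altWord, actsOn, alternating, hn, hpq.symm, Nat.even_add_one]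

variable {H : Type} [NormedAddCommGroup H] [InnerProductSpace ℂ H]
  {b : Fin r → Fin r → ℝ} {e : Fin r × List (Fin r) → H} {c : Fin r → Fin r → H →L[ℂ] H}

theorem creation_apply_altWord
    (hc : ∀ i j x, c i j (e x) =
      if actsOn j x then (Real.sqrt (b i j) : ℂ) • e (x.1, i :: x.2) else 0)
    (hpq : p ≠ q) (n : ℕ) :
    c p q (e (q, altWord p q n)) + c q p (e (q, altWord p q n)) =
      (Real.sqrt (alternating (b p q) (b q p) n) : ℂ) • e (q, altWord p q (n + 1)) := by
  rw [hc, hc, actsOn_altWord_right hpq, actsOn_altWord_left hpq]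
  by_cases hn : Even n <;> simp [altWord, alternating, hn]

theorem annihilation_apply_altWord_succ [CompleteSpace H] (he : Orthonormal ℂ e)
    (hdense : (Submodule.span ℂ (Set.range e)).topologicalClosure = ⊤)
    (hc : ∀ i j x, c i j (e x) =
      if actsOn j x then (Real.sqrt (b i j) : ℂ) • e (x.1, i :: x.2) else 0)
    (hpq : p ≠ q) (n : ℕ) :
    adjoint (c p q) (e (q, altWord p q (n + 1))) + adjoint (c q p) (e (q, altWord p q (n + 1))) =
      (Real.sqrt (alternating (b p q) (b q p) n) : ℂ) • e (q, altWord p q n) := by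
  rw [altWord, adjoint_apply_cons he hdense hc, adjoint_apply_cons he hdense hc,
    actsOn_altWord_right hpq, actsOn_altWord_left hpq]
  by_cases hn : Even n <;> simp [alternating, hn, hpq, hpq.symm]

theorem inner_symmetrized_pow_apply [CompleteSpace H] (hb : ∀ i j, 0 ≤ b i j) (he : Orthonormal ℂ e)
    (hdense : (Submodule.span ℂ (Set.range e)).topologicalClosure = ⊤)
    (hc : ∀ i j x, c i j (e x) =
      if actsOn j x then (Real.sqrt (b i j) : ℂ) • e (x.1, i :: x.2) else 0)
    {om : Fin r → Fin r → H →L[ℂ] H} (hom : ∀ i j, om i j = c i j + adjoint (c i j))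
    (hpq : p ≠ q) (M : ℕ) :
    inner ℂ (e (q, [])) (((om p q + om q p) ^ M) (e (q, []))) =
      ((dyckSum (alternating (b p q) (b q p)) M 0 : ℝ) : ℂ) := by
  set lam := alternating (b p q) (b q p)
  have hsymm : ((om p q + om q p : H →L[ℂ] H) : H →ₗ[ℂ] H).IsSymmetric := by
    refine isSelfAdjoint_iff_isSymmetric.1 ?_
    rw [hom, hom, ← star_eq_adjoint, ← star_eq_adjoint]
    exact (IsSelfAdjoint.add_star_self _).add (IsSelfAdjoint.add_star_self _)
  have hchain : Orthonormal ℂ fun n => e (q, altWord p q n) :=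
    he.comp _ fun n n' h => by simpa [length_altWord] using congrArg (List.length ∘ Prod.snd) h
  have hsplit : ∀ x, (om p q + om q p) x =
      (c p q x + c q p x) + (adjoint (c p q) x + adjoint (c q p) x) := fun x => by
    simp only [hom, add_apply]
    abel
  have hsq : (fun j => Real.sqrt (lam j) ^ 2) = lam :=
    funext fun j => Real.sq_sqrt (by unfold lam alternating; split_ifs <;> apply hb)
  have := inner_pow_apply_of_jacobi hsymm hchain (a := fun j => Real.sqrt (lam j))
    (by rw [hsplit, creation_apply_altWord hc hpq, altWord, adjoint_apply_nil he hdense hc,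
      adjoint_apply_nil he hdense hc, add_zero, add_zero]; rfl)
    (fun k => by rw [hsplit, creation_apply_altWord hc hpq,
      annihilation_apply_altWord_succ he hdense hc hpq]; rfl) M 0
  simpa [hsq, altWord] using this

end AlternatingChain

/-- For `p ≠ q` and every `m`,
`Ψ_q(ω̂_{p,q}^m) = ∑_{π ∈ NC²_m} b_{p,q}^{|𝓑_o(π)|} b_{q,p}^{|𝓑_e(π)|}`,
where `𝓑_o(π)` are the blocks of depth `0,2,4,…` (contributing `b_{p,q}`) and `𝓑_e(π)`
those of depth `1,3,…` (contributing `b_{q,p}`); for odd `m` the sum is empty, so odd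
moments vanish.  In particular, if `(b_{p,q}, b_{q,p}) = (d_p, d_q)` then
`Ψ_q(ω̂_{p,q}⁶) = d_p³ + 3 d_p² d_q + d_p d_q²`. -/
theorem stmt7 {H : Type} [NormedAddCommGroup H] [InnerProductSpace ℂ H] [CompleteSpace H]
    (r : ℕ) (b : Fin r → Fin r → ℝ) (hb : ∀ i j, 0 ≤ b i j)
    (e : Fin r × List (Fin r) → H) (he : Orthonormal ℂ e)
    (hdense : (Submodule.span ℂ (Set.range e)).topologicalClosure = ⊤)
    (c : Fin r → Fin r → H →L[ℂ] H)
    (hc : ∀ i j x, c i j (e x) =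
      if actsOn j x then (Real.sqrt (b i j) : ℂ) • e (x.1, i :: x.2) else 0)
    (om : Fin r → Fin r → H →L[ℂ] H)
    (hom : ∀ i j, om i j = c i j + adjoint (c i j))
    (p q : Fin r) (hpq : p ≠ q)
    (d : Fin r → ℝ) (hbp : b p q = d p) (hbq : b q p = d q) :
    (∀ m : ℕ,
      (@inner ℂ H _ (e (q, ([] : List (Fin r)))) (((om p q + om q p) ^ m) (e (q, [])))) =
      ((∑ π : {f : Fin m → Fin m // IsNCPairing f},
        (b p q) ^ (evenDepthBlocks π.1).card * (b q p) ^ (oddDepthBlocks π.1).card : ℝ) : ℂ)) ∧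
    (@inner ℂ H _ (e (q, ([] : List (Fin r)))) (((om p q + om q p) ^ 6) (e (q, [])))) =
      ((d p ^ 3 + 3 * d p ^ 2 * d q + d p * d q ^ 2 : ℝ) : ℂ) := by
  have hmoment := inner_symmetrized_pow_apply hb he hdense hc hom hpq
  refine ⟨fun m => ?_, ?_⟩
  · simp only [hmoment, ← sum_pairingWeight_eq_dyckSum, pairingWeight_alternating]
  · rw [hmoment, dyckSum_six]
    norm_num [alternating, hbp, hbq]
    ring
end

section
/- The moments of the sum $\omega = \sum_{p,q}\omega_{p,q}$ of collective matricially free Gaussian operators satisfy the recurrence $\Psi_q(\omega^{2m}) = \sum_{p=1}^{r}\sum_{k=0}^{m-1} b_{p,q}\,\Psi_p(\omega^{2k})\,\Psi_q(\omega^{2m-2k-2})$, with $\Psi_q(\omega^0)=1$ and vanishing odd moments, and consequently $\Psi_q(\omega^{2m}) = \sum_{(\pi,f)\in\mathcal{NC}_{2m,q}^2[r]} b_q(\pi,f)$, where $b_q(\pi,f)=\prod_k b_q(\pi_k,f)$ and $b_q(\pi_k,f)=b_{i,j}$ whenever block $\pi_k$ is colored by $i$ and its nearest outer block by $j$. -/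
open ContinuousLinearMap

/-- The color of the nearest outer block of the block with left leg `l` under a coloring
`g` of the elements (constant on blocks); for a covering block this is the color `q` of
the imaginary block. -/
def outerColor {r m : ℕ} (q : Fin r) (f : Fin m → Fin m) (g : Fin m → Fin r)
    (l : Fin m) : Fin r :=
  let S := Finset.univ.filter (fun j => j < f j ∧ j < l ∧ f l < f j)
  if h : S.Nonempty then g (S.max' h) else q

/-- `b_q(π, f) = ∏_{blocks} b_{i,j}` where a block colored `i` whose nearest outer block
is colored `j` contributes `b_{i,j}` (the imaginary block being colored `q`). -/
def ncWeight {r m : ℕ} (b : Fin r → Fin r → ℝ) (q : Fin r) (f : Fin m → Fin m)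
    (g : Fin m → Fin r) : ℝ :=
  ∏ l ∈ leftLegs f, b (g l) (outerColor q f g l)

/-!
Both sides of the moment formula satisfy the same recursion. On the Fock side, `ω` maps the
basis vector `e (q, s)` to a combination of `e (q, i :: s)` (creations, weight `√(b i j)` for
the top colour `j` of `s`) and `e (q, tail s)` (annihilations), so `Ψ_q(ω^n)` is a weighted
count of closed coloured Dyck paths; cutting such a path at its first return to the ground
level gives the recursion, with `b p q = √(b p q)²` coming from the first and the returning
step. On the pairing side, the block of `0` is `{0, 2k+1}`: noncrossingness forces the
pairing to split into a pairing of `[1, 2k]` nested under a block of colour `p` and a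
pairing of `[2k+2, 2m-1]`, and `ncWeight` factors accordingly.
-/

open scoped InnerProductSpace

lemma ext_inner_of_dense_span {𝕜 H ι : Type*} [RCLike 𝕜] [NormedAddCommGroup H]
    [InnerProductSpace 𝕜 H] [CompleteSpace H] {e : ι → H}
    (hdense : (Submodule.span 𝕜 (Set.range e)).topologicalClosure = ⊤) {v w : H}
    (h : ∀ i, ⟪e i, v⟫_𝕜 = ⟪e i, w⟫_𝕜) : v = w := by
  have hmem : v - w ∈ (Submodule.span 𝕜 (Set.range e))ᗮ := by
    rw [Submodule.mem_orthogonal]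
    intro u hu
    induction hu using Submodule.span_induction with
    | mem x hx =>
      obtain ⟨i, rfl⟩ := hx
      rw [inner_sub_right, h i, sub_self]
    | zero => exact inner_zero_left _
    | add x y _ _ hx hy => rw [inner_add_left, hx, hy, add_zero]
    | smul a x _ hx => rw [inner_smul_left, hx, mul_zero]
  rw [Submodule.topologicalClosure_eq_top_iff.mp hdense, Submodule.mem_bot] at hmem
  exact sub_eq_zero.mp hmem

lemma even_card_of_involutive {α : Type*} [Fintype α] [DecidableEq α] {f : α → α}
    (hf : Function.Involutive f) (hne : ∀ a, f a ≠ a) : Even (Fintype.card α) := by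
  have h := Equiv.Perm.card_fixedPoints_modEq (p := 2) (n := 1) (f := (f : Function.End α))
    (hp := ⟨Nat.prime_two⟩) (funext hf)
  have h0 : Fintype.card (Function.fixedPoints (f : Function.End α)) = 0 :=
    Fintype.card_eq_zero_iff.mpr ⟨fun ⟨a, ha⟩ => hne a ha⟩
  rw [h0] at h
  exact Nat.even_iff.mpr h

namespace IsNCPairing

lemma of_orderEmbedding {a n : ℕ} {F : Fin n → Fin n} {f : Fin a → Fin a}
    (φ : Fin a ↪o Fin n) (hF : IsNCPairing F) (hφ : ∀ j, φ (f j) = F (φ j)) :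
    IsNCPairing f := by
  obtain ⟨hFF, hFne, hFc⟩ := hF
  refine ⟨fun j => φ.injective ?_, fun j h => hFne (φ j) ?_, fun i j hij hj hfi => ?_⟩
  · rw [hφ, hφ, hFF]
  · rw [← hφ, h]
  · refine hFc (φ i) (φ j) (φ.lt_iff_lt.mpr hij) ?_ ?_
    · simpa [← hφ] using hj
    · simpa [← hφ] using hfi

variable {n : ℕ} {F : Fin n → Fin n} (hF : IsNCPairing F)
include hF

lemma injective : Function.Injective F :=
  Function.LeftInverse.injective hF.1

lemma apply_mem_Ioo_iff {i j : Fin n} :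
    F j ∈ Set.Ioo i (F i) ↔ j ∈ Set.Ioo i (F i) := by
  have hinj := IsNCPairing.injective hF
  obtain ⟨hFF, -, hFc⟩ := hF
  have key : ∀ j, j ∈ Set.Ioo i (F i) → F j ∈ Set.Ioo i (F i) := by
    rintro j ⟨hij, hji⟩
    have hne_i : F j ≠ i := fun h => (ne_of_lt hji) (by rw [← h, hFF])
    have hne_Fi : F j ≠ F i := fun h => (ne_of_gt hij) (hinj h)
    refine ⟨lt_of_le_of_ne (not_lt.mp fun h => hFc (F j) i h ?_ ?_) hne_i.symm,
      lt_of_le_of_ne (not_lt.mp fun h => hFc i j hij hji h) hne_Fi⟩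
    · rwa [hFF]
    · rwa [hFF]
  exact ⟨fun h => hFF j ▸ key (F j) h, key j⟩

lemma even_card_Ioo (i : Fin n) : Even ((F i : ℕ) - i - 1) := by
  classical
  have hcard := Fin.card_Ioo i (F i)
  rw [← Fintype.card_coe] at hcard
  rw [← hcard]
  refine even_card_of_involutive (f := fun j => ⟨F j, ?_⟩) (fun j => Subtype.ext (hF.1 j))
    fun j h => hF.2.1 j (congrArg Subtype.val h)
  exact Finset.mem_Ioo.mpr ((apply_mem_Ioo_iff hF).mpr (Finset.mem_Ioo.mp j.2))

end IsNCPairing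

lemma mem_leftLegs {n : ℕ} {f : Fin n → Fin n} {i : Fin n} : i ∈ leftLegs f ↔ i < f i := by
  simp [leftLegs]

def enclosingLegs {n : ℕ} (f : Fin n → Fin n) (l : Fin n) : Finset (Fin n) :=
  Finset.univ.filter fun j => j < f j ∧ j < l ∧ f l < f j

lemma outerColor_eq {r n : ℕ} (q : Fin r) (f : Fin n → Fin n) (g : Fin n → Fin r) (l : Fin n) :
    outerColor q f g l =
      if h : (enclosingLegs f l).Nonempty then g ((enclosingLegs f l).max' h) else q :=
  rfl

lemma mem_enclosingLegs {n : ℕ} {f : Fin n → Fin n} {l j : Fin n} :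
    j ∈ enclosingLegs f l ↔ j < f j ∧ j < l ∧ f l < f j := by
  simp [enclosingLegs]

lemma actsOn_iff {r : ℕ} (q j : Fin r) (s : List (Fin r)) :
    actsOn j (q, s) = true ↔ j = s.headD q := by
  cases s <;> simpa [actsOn] using eq_comm

namespace MatriciallyFree

variable {r : ℕ}

/-- The stack `s` of colours labels the basis vector `e (q, s)`. A move `some i` is a
creation of colour `i`, a move `none` an annihilation; moves are applied from the left,
and the result is `none` once the vacuum is annihilated. -/
def finalStack : List (Fin r) → List (Option (Fin r)) → Option (List (Fin r))
  | s, [] => some s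
  | s, some i :: ms => finalStack (i :: s) ms
  | [], none :: _ => none
  | _ :: t, none :: ms => finalStack t ms

/-- A creation or annihilation of colour `i` just above colour `j` on the stack (`j = q` at the
bottom) costs `√(b i j)`, as does `℘_{i,j}` or its adjoint. -/
noncomputable def pathWeight (b : Fin r → Fin r → ℝ) (q : Fin r) :
    List (Fin r) → List (Option (Fin r)) → ℝ
  | _, [] => 1
  | s, some i :: ms => √(b i (s.headD q)) * pathWeight b q (i :: s) ms
  | [], none :: _ => 0
  | a :: t, none :: ms => √(b a (t.headD q)) * pathWeight b q t ms

section Walks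

variable {b : Fin r → Fin r → ℝ} {q : Fin r}

@[simp] lemma finalStack_nil (s : List (Fin r)) : finalStack s [] = some s := by
  simp [finalStack]

@[simp] lemma finalStack_create (s : List (Fin r)) (i : Fin r) (ms : List (Option (Fin r))) :
    finalStack s (some i :: ms) = finalStack (i :: s) ms := by
  cases s <;> simp [finalStack]

@[simp] lemma finalStack_annihilate_vacuum (ms : List (Option (Fin r))) :
    finalStack [] (none :: ms) = none := by
  simp [finalStack]

@[simp] lemma finalStack_annihilate (a : Fin r) (t : List (Fin r)) (ms : List (Option (Fin r))) :
    finalStack (a :: t) (none :: ms) = finalStack t ms := by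
  simp [finalStack]

@[simp] lemma pathWeight_nil (s : List (Fin r)) : pathWeight b q s [] = 1 := by
  simp [pathWeight]

@[simp] lemma pathWeight_create (s : List (Fin r)) (i : Fin r) (ms : List (Option (Fin r))) :
    pathWeight b q s (some i :: ms) = √(b i (s.headD q)) * pathWeight b q (i :: s) ms := by
  cases s <;> simp [pathWeight]

@[simp] lemma pathWeight_annihilate_vacuum (ms : List (Option (Fin r))) :
    pathWeight b q [] (none :: ms) = 0 := by
  simp [pathWeight]

@[simp] lemma pathWeight_annihilate (a : Fin r) (t : List (Fin r)) (ms : List (Option (Fin r))) :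
    pathWeight b q (a :: t) (none :: ms) = √(b a (t.headD q)) * pathWeight b q t ms := by
  simp [pathWeight]

lemma finalStack_append (s : List (Fin r)) (A B : List (Option (Fin r))) :
    finalStack s (A ++ B) = (finalStack s A).bind (finalStack · B) := by
  induction A generalizing s with
  | nil => simp
  | cons mv A ih =>
    match mv, s with
    | some i, s => simpa using ih (i :: s)
    | none, [] => simp
    | none, a :: t => simpa using ih t

lemma finalStack_append_bottom {s s' : List (Fin r)} (u : List (Fin r))
    {A : List (Option (Fin r))} (h : finalStack s A = some s') :
    finalStack (s ++ u) A = some (s' ++ u) := by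
  induction A generalizing s with
  | nil => simp_all
  | cons mv A ih =>
    match mv, s with
    | some i, s => simpa using ih (s := i :: s) (by simpa using h)
    | none, [] => simp at h
    | none, a :: t => simpa using ih (s := t) (by simpa using h)

lemma pathWeight_append {s s' : List (Fin r)} {A : List (Option (Fin r))}
    (B : List (Option (Fin r))) (h : finalStack s A = some s') :
    pathWeight b q s (A ++ B) = pathWeight b q s A * pathWeight b q s' B := by
  induction A generalizing s with
  | nil => simp_all
  | cons mv A ih =>
    match mv, s with
    | some i, s =>
      simp only [List.cons_append, pathWeight_create, ih (s := i :: s) (by simpa using h)]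
      ring
    | none, [] => simp at h
    | none, a :: t =>
      simp only [List.cons_append, pathWeight_annihilate, ih (s := t) (by simpa using h)]
      ring

/-- A walk that never digs below the stack `s` does not see what lies under it, except
through the colour of the new bottom. -/
lemma pathWeight_append_bottom {s s' : List (Fin r)} (u : List (Fin r))
    {A : List (Option (Fin r))} (h : finalStack s A = some s') :
    pathWeight b q (s ++ u) A = pathWeight b (u.headD q) s A := by
  have headD_append (s : List (Fin r)) : (s ++ u).headD q = s.headD (u.headD q) := by
    cases s <;> simp
  induction A generalizing s with
  | nil => simp
  | cons mv A ih =>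
    match mv, s with
    | some i, s =>
      have := ih (s := i :: s) (by simpa using h)
      simp only [List.cons_append] at this
      simp only [pathWeight_create, this, headD_append]
    | none, [] => simp at h
    | none, a :: t =>
      simp only [List.cons_append, pathWeight_annihilate, ih (s := t) (by simpa using h),
        headD_append]

lemma length_finalStack_mod_two {s s' : List (Fin r)} {A : List (Option (Fin r))}
    (h : finalStack s A = some s') : s'.length % 2 = (s.length + A.length) % 2 := by
  induction A generalizing s with
  | nil => simp_all
  | cons mv A ih =>
    match mv, s with
    | some i, s => have := ih (s := i :: s) (by simpa using h); simp at this ⊢; omega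
    | none, [] => simp at h
    | none, a :: t => have := ih (s := t) (by simpa using h); simp at this ⊢; omega

lemma exists_first_return {p : Fin r} : ∀ {ms : List (Option (Fin r))} (s : List (Fin r)),
    finalStack (s ++ [p]) ms = some [] →
    ∃ A B, ms = A ++ none :: B ∧ finalStack s A = some [] ∧ finalStack [] B = some []
  | [], s => by simp
  | some i :: ms, s => fun h => by
    obtain ⟨A, B, rfl, hA, hB⟩ := exists_first_return (i :: s) (by simpa using h)
    exact ⟨some i :: A, B, rfl, by simpa using hA, hB⟩
  | none :: ms, [] => fun h => ⟨[], ms, rfl, rfl, by simpa using h⟩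
  | none :: ms, a :: t => fun h => by
    obtain ⟨A, B, rfl, hA, hB⟩ := exists_first_return t (by simpa using h)
    exact ⟨none :: A, B, rfl, by simpa using hA, hB⟩

lemma first_return_unique : ∀ {A A' B B' : List (Option (Fin r))} {s : List (Fin r)},
    A ++ none :: B = A' ++ none :: B' → finalStack s A = some [] →
      finalStack s A' = some [] → A = A'
  | [], [], _, _, _ => fun _ _ _ => rfl
  | [], mv :: A', _, _, s => fun he h h' => by
    obtain ⟨rfl, -⟩ := List.cons_eq_cons.mp he
    obtain rfl : s = [] := by simpa using h
    simp at h'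
  | mv :: A, [], _, _, s => fun he h h' => by
    obtain ⟨rfl, -⟩ := List.cons_eq_cons.mp he
    obtain rfl : s = [] := by simpa using h'
    simp at h
  | some i :: A, mv' :: A', _, _, s => fun he h h' => by
    simp only [List.cons_append, List.cons.injEq] at he
    obtain ⟨rfl, he⟩ := he
    exact congrArg _ (first_return_unique (s := i :: s) he (by simpa using h) (by simpa using h'))
  | none :: A, mv' :: A', _, _, [] => fun _ h _ => by simp at h
  | none :: A, mv' :: A', _, _, a :: t => fun he h h' => by
    simp only [List.cons_append, List.cons.injEq] at he
    obtain ⟨rfl, he⟩ := he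
    exact congrArg _ (first_return_unique (s := t) he (by simpa using h) (by simpa using h'))

end Walks

section ClosedPaths

variable {b : Fin r → Fin r → ℝ} {q : Fin r}

def listsOfLength (α : Type*) [Fintype α] [DecidableEq α] : ℕ → Finset (List α)
  | 0 => {[]}
  | n + 1 => (Finset.univ ×ˢ listsOfLength α n).image fun x => x.1 :: x.2

lemma mem_listsOfLength {α : Type*} [Fintype α] [DecidableEq α] {n : ℕ} {l : List α} :
    l ∈ listsOfLength α n ↔ l.length = n := by
  induction n generalizing l with
  | zero => simp [listsOfLength]
  | succ n ih => cases l with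
    | nil => simp [listsOfLength]
    | cons a l => simp [listsOfLength, ih]

variable (r) in
def closedPaths (n : ℕ) : Finset (List (Option (Fin r))) :=
  (listsOfLength _ n).filter (finalStack [] · = some [])

lemma mem_closedPaths {n : ℕ} {ms : List (Option (Fin r))} :
    ms ∈ closedPaths r n ↔ ms.length = n ∧ finalStack [] ms = some [] := by
  simp [closedPaths, mem_listsOfLength]

variable (b) in
noncomputable def closedPathSum (q : Fin r) (n : ℕ) : ℝ :=
  ∑ ms ∈ closedPaths r n, pathWeight b q [] ms

lemma closedPathSum_zero : closedPathSum b q 0 = 1 := by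
  simp [closedPathSum, closedPaths, listsOfLength, Finset.filter_singleton]

lemma closedPathSum_of_odd {n : ℕ} (hn : Odd n) : closedPathSum b q n = 0 := by
  refine Finset.sum_eq_zero fun ms hms => ?_
  rw [mem_closedPaths] at hms
  have := length_finalStack_mod_two hms.2
  simp only [List.length_nil, hms.1, zero_add, Nat.zero_mod] at this
  exact absurd hn (Nat.not_odd_iff_even.mpr (Nat.even_iff.mpr this.symm))

lemma finalStack_nest {p : Fin r} {A B : List (Option (Fin r))}
    (hA : finalStack [] A = some []) (hB : finalStack [] B = some []) :
    finalStack [] (some p :: (A ++ none :: B)) = some [] := by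
  have hA' : finalStack [p] A = some [p] := by simpa using finalStack_append_bottom [p] hA
  simpa [finalStack_append, hA'] using hB

lemma pathWeight_nest (hb : ∀ i j, 0 ≤ b i j) {p : Fin r} {A : List (Option (Fin r))}
    (B : List (Option (Fin r))) (hA : finalStack [] A = some []) :
    pathWeight b q [] (some p :: (A ++ none :: B)) =
      b p q * pathWeight b p [] A * pathWeight b q [] B := by
  have hA' : finalStack [p] A = some [p] := by simpa using finalStack_append_bottom [p] hA
  have hpA : pathWeight b q [p] A = pathWeight b p [] A := by
    simpa using pathWeight_append_bottom (b := b) (q := q) [p] hA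
  rw [pathWeight_create, pathWeight_append _ hA', pathWeight_annihilate, hpA, List.headD_nil]
  linear_combination (pathWeight b p [] A * pathWeight b q [] B) * Real.mul_self_sqrt (hb p q)

lemma closedPathSum_rec (hb : ∀ i j, 0 ≤ b i j) {m : ℕ} (hm : 1 ≤ m) :
    closedPathSum b q (2 * m) = ∑ p, ∑ k ∈ Finset.range m,
      b p q * closedPathSum b p (2 * k) * closedPathSum b q (2 * m - 2 * k - 2) := by
  have hflat : ∑ p, ∑ k ∈ Finset.range m,
      b p q * closedPathSum b p (2 * k) * closedPathSum b q (2 * m - 2 * k - 2) =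
      ∑ x ∈ (Finset.univ ×ˢ Finset.range m).sigma
        (fun pk => closedPaths r (2 * pk.2) ×ˢ closedPaths r (2 * m - 2 * pk.2 - 2)),
        b x.1.1 q * pathWeight b x.1.1 [] x.2.1 * pathWeight b q [] x.2.2 := by
    simp only [Finset.sum_sigma, Finset.sum_product, closedPathSum, Finset.mul_sum,
      Finset.sum_mul, mul_assoc]
    exact Finset.sum_congr rfl fun p _ => Finset.sum_congr rfl fun k _ => Finset.sum_comm
  rw [hflat, closedPathSum]
  symm
  refine Finset.sum_bij (fun x _ => some x.1.1 :: (x.2.1 ++ none :: x.2.2)) ?_ ?_ ?_ ?_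
  · rintro ⟨⟨p, k⟩, A, B⟩ hx
    simp only [Finset.mem_sigma, Finset.mem_product, Finset.mem_range, mem_closedPaths] at hx
    obtain ⟨⟨-, hk⟩, ⟨hA, hcA⟩, hB, hcB⟩ := hx
    refine mem_closedPaths.mpr ⟨?_, finalStack_nest hcA hcB⟩
    simp only [List.length_cons, List.length_append, hA, hB]
    omega
  · rintro ⟨⟨p, k⟩, A, B⟩ hx ⟨⟨p', k'⟩, A', B'⟩ hx' he
    simp only [Finset.mem_sigma, Finset.mem_product, Finset.mem_range, mem_closedPaths] at hx hx'
    simp only [List.cons.injEq, Option.some.injEq] at he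
    obtain ⟨rfl, he⟩ := he
    obtain rfl := first_return_unique he hx.2.1.2 hx'.2.1.2
    obtain rfl : B = B' := by simpa using he
    obtain rfl : k = k' := by omega
    rfl
  · intro ms hms
    obtain ⟨hlen, hcl⟩ := mem_closedPaths.mp hms
    match ms, hlen, hcl with
    | [], hlen, _ => simp at hlen; omega
    | none :: _, _, hcl => simp at hcl
    | some p :: ms, hlen, hcl =>
      obtain ⟨A, B, rfl, hA, hB⟩ := exists_first_return (p := p) [] (by simpa using hcl)
      have hpar := length_finalStack_mod_two hA
      simp only [List.length_cons, List.length_append] at hlen hpar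
      refine ⟨⟨(p, A.length / 2), A, B⟩, ?_, rfl⟩
      simp only [Finset.mem_sigma, Finset.mem_product, Finset.mem_univ, Finset.mem_range,
        mem_closedPaths]
      exact ⟨⟨trivial, by omega⟩, ⟨by omega, hA⟩, by omega, hB⟩
  · rintro ⟨⟨p, k⟩, A, B⟩ hx
    simp only [Finset.mem_sigma, Finset.mem_product, mem_closedPaths] at hx
    exact (pathWeight_nest hb B hx.2.1.2).symm

end ClosedPaths

section Nest

variable {m k : ℕ} (hk : k < m)

def embInner : Fin (2 * k) ↪o Fin (2 * m) :=
  OrderEmbedding.ofStrictMono (fun j => ⟨j + 1, by omega⟩) fun _ _ h =>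
    Fin.mk_lt_mk.mpr (Nat.add_lt_add_right h _)

def embOuter : Fin (2 * (m - k - 1)) ↪o Fin (2 * m) :=
  OrderEmbedding.ofStrictMono (fun j => ⟨j + (2 * k + 2), by omega⟩) fun _ _ h =>
    Fin.mk_lt_mk.mpr (Nat.add_lt_add_right h _)

@[simp] lemma embInner_val (j : Fin (2 * k)) : (embInner hk j : ℕ) = j + 1 := rfl

@[simp] lemma embOuter_val (j : Fin (2 * (m - k - 1))) :
    (embOuter hk j : ℕ) = j + (2 * k + 2) := rfl

def zeroPos : Fin (2 * m) := ⟨0, by omega⟩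

def pivotPos : Fin (2 * m) := ⟨2 * k + 1, by omega⟩

@[simp] lemma zeroPos_val : (zeroPos hk : ℕ) = 0 := rfl

@[simp] lemma pivotPos_val : (pivotPos hk : ℕ) = 2 * k + 1 := rfl

/-- The pairing of `[2m]` with the covering block `{0, 2k+1}`, `f₁` nested inside it and
`f₂` to its right. -/
def nestPairing (f₁ : Fin (2 * k) → Fin (2 * k))
    (f₂ : Fin (2 * (m - k - 1)) → Fin (2 * (m - k - 1))) (i : Fin (2 * m)) : Fin (2 * m) :=
  if h₀ : i.val = 0 then pivotPos hk
  else if h₁ : i.val = 2 * k + 1 then zeroPos hk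
  else if h : i.val < 2 * k + 1 then embInner hk (f₁ ⟨i.val - 1, by omega⟩)
  else embOuter hk (f₂ ⟨i.val - (2 * k + 2), by have := i.isLt; omega⟩)

def nestColoring (p : Fin r) (g₁ : Fin (2 * k) → Fin r) (g₂ : Fin (2 * (m - k - 1)) → Fin r)
    (i : Fin (2 * m)) : Fin r :=
  if h₀ : i.val = 0 ∨ i.val = 2 * k + 1 then p
  else if h : i.val < 2 * k + 1 then g₁ ⟨i.val - 1, by omega⟩
  else g₂ ⟨i.val - (2 * k + 2), by have := i.isLt; omega⟩

variable (f₁ : Fin (2 * k) → Fin (2 * k)) (f₂ : Fin (2 * (m - k - 1)) → Fin (2 * (m - k - 1)))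
  (p : Fin r) (g₁ : Fin (2 * k) → Fin r) (g₂ : Fin (2 * (m - k - 1)) → Fin r)

lemma nestPairing_zero : nestPairing hk f₁ f₂ (zeroPos hk) = pivotPos hk := by
  simp [nestPairing, zeroPos, pivotPos]

lemma nestPairing_pivot : nestPairing hk f₁ f₂ (pivotPos hk) = zeroPos hk := by
  simp [nestPairing, zeroPos, pivotPos]

lemma nestPairing_inner (j : Fin (2 * k)) :
    nestPairing hk f₁ f₂ (embInner hk j) = embInner hk (f₁ j) := by
  have := j.isLt
  rw [nestPairing, dif_neg (by simp), dif_neg (by simp; omega), dif_pos (by simp)]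
  simp

lemma nestPairing_outer (j : Fin (2 * (m - k - 1))) :
    nestPairing hk f₁ f₂ (embOuter hk j) = embOuter hk (f₂ j) := by
  rw [nestPairing, dif_neg (by simp), dif_neg (by simp; omega), dif_neg (by simp; omega)]
  simp

lemma nestColoring_zero : nestColoring hk p g₁ g₂ (zeroPos hk) = p := by
  simp [nestColoring, zeroPos]

lemma nestColoring_pivot : nestColoring hk p g₁ g₂ (pivotPos hk) = p := by
  simp [nestColoring, pivotPos]

lemma nestColoring_inner (j : Fin (2 * k)) : nestColoring hk p g₁ g₂ (embInner hk j) = g₁ j := by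
  have := j.isLt
  rw [nestColoring, dif_neg (by simp; omega), dif_pos (by simp)]
  simp

lemma nestColoring_outer (j : Fin (2 * (m - k - 1))) :
    nestColoring hk p g₁ g₂ (embOuter hk j) = g₂ j := by
  rw [nestColoring, dif_neg (by simp; omega), dif_neg (by simp; omega)]
  simp

lemma nestPairing_inj {f₁' : Fin (2 * k) → Fin (2 * k)}
    {f₂' : Fin (2 * (m - k - 1)) → Fin (2 * (m - k - 1))}
    (h : nestPairing hk f₁ f₂ = nestPairing hk f₁' f₂') : f₁ = f₁' ∧ f₂ = f₂' :=
  ⟨funext fun j => (embInner hk).injective <| by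
      rw [← nestPairing_inner hk f₁ f₂, h, nestPairing_inner],
    funext fun j => (embOuter hk).injective <| by
      rw [← nestPairing_outer hk f₁ f₂, h, nestPairing_outer]⟩

lemma nestColoring_inj {p' : Fin r} {g₁' : Fin (2 * k) → Fin r}
    {g₂' : Fin (2 * (m - k - 1)) → Fin r}
    (h : nestColoring hk p g₁ g₂ = nestColoring hk p' g₁' g₂') : p = p' ∧ g₁ = g₁' ∧ g₂ = g₂' :=
  ⟨by simpa [nestColoring_zero] using congrFun h (zeroPos hk),
    funext fun j => by simpa [nestColoring_inner] using congrFun h (embInner hk j),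
    funext fun j => by simpa [nestColoring_outer] using congrFun h (embOuter hk j)⟩

lemma fin_cases_nest (i : Fin (2 * m)) :
    i = zeroPos hk ∨ i = pivotPos hk ∨ (∃ j, i = embInner hk j) ∨ ∃ j, i = embOuter hk j := by
  obtain ⟨i, hi⟩ := i
  simp only [zeroPos, pivotPos, Fin.ext_iff, embInner_val, embOuter_val, Fin.exists_iff]
  rcases Nat.lt_trichotomy i (2 * k + 1) with h | rfl | h
  · rcases i with _ | i
    · exact Or.inl rfl
    · exact Or.inr <| Or.inr <| Or.inl ⟨i, by omega, rfl⟩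
  · exact Or.inr <| Or.inl rfl
  · exact Or.inr <| Or.inr <| Or.inr ⟨i - (2 * k + 2), by omega, by omega⟩

lemma isNCPairing_nestPairing (h₁ : IsNCPairing f₁) (h₂ : IsNCPairing f₂) :
    IsNCPairing (nestPairing hk f₁ f₂) := by
  obtain ⟨h₁i, h₁n, h₁c⟩ := h₁
  obtain ⟨h₂i, h₂n, h₂c⟩ := h₂
  refine ⟨fun i => ?_, fun i => ?_, fun i j hij hj hfi => ?_⟩
  · rcases fin_cases_nest hk i with rfl | rfl | ⟨j, rfl⟩ | ⟨j, rfl⟩ <;>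
      simp [nestPairing_zero, nestPairing_pivot, nestPairing_inner, nestPairing_outer, h₁i, h₂i]
  · rcases fin_cases_nest hk i with rfl | rfl | ⟨j, rfl⟩ | ⟨j, rfl⟩
    · simp [nestPairing_zero, Fin.ext_iff]
    · simp [nestPairing_pivot, Fin.ext_iff]
    · simpa [nestPairing_inner] using h₁n j
    · simpa [nestPairing_outer] using h₂n j
  · rcases fin_cases_nest hk i with rfl | rfl | ⟨a, rfl⟩ | ⟨a, rfl⟩ <;>
      rcases fin_cases_nest hk j with rfl | rfl | ⟨c, rfl⟩ | ⟨c, rfl⟩ <;>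
      simp only [nestPairing_zero, nestPairing_pivot, nestPairing_inner, nestPairing_outer,
        OrderEmbedding.lt_iff_lt] at hij hj hfi
    all_goals first
      | exact h₁c _ _ hij hj hfi
      | exact h₂c _ _ hij hj hfi
      | simp only [Fin.lt_def, zeroPos_val, pivotPos_val, embInner_val, embOuter_val] at hij hj hfi
        omega

lemma nestColoring_comp_nestPairing (hg₁ : ∀ i, g₁ (f₁ i) = g₁ i)
    (hg₂ : ∀ i, g₂ (f₂ i) = g₂ i) (i : Fin (2 * m)) :
    nestColoring hk p g₁ g₂ (nestPairing hk f₁ f₂ i) = nestColoring hk p g₁ g₂ i := by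
  rcases fin_cases_nest hk i with rfl | rfl | ⟨j, rfl⟩ | ⟨j, rfl⟩ <;>
    simp [nestPairing_zero, nestPairing_pivot, nestPairing_inner, nestPairing_outer,
      nestColoring_zero, nestColoring_pivot, nestColoring_inner, nestColoring_outer, hg₁, hg₂]

lemma leftLegs_nestPairing :
    leftLegs (nestPairing hk f₁ f₂) = insert (zeroPos hk)
      ((leftLegs f₁).image (embInner hk) ∪ (leftLegs f₂).image (embOuter hk)) := by
  ext i
  simp only [mem_leftLegs, Finset.mem_insert, Finset.mem_union, Finset.mem_image]
  rcases fin_cases_nest hk i with rfl | rfl | ⟨j, rfl⟩ | ⟨j, rfl⟩ <;>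
    simp only [nestPairing_zero, nestPairing_pivot, nestPairing_inner, nestPairing_outer,
      (embInner hk).injective.eq_iff, (embOuter hk).injective.eq_iff, OrderEmbedding.lt_iff_lt,
      exists_eq_right] <;>
    simp only [Fin.ext_iff, Fin.lt_def, zeroPos_val, pivotPos_val, embInner_val, embOuter_val] <;>
    grind

lemma enclosingLegs_nestPairing_zero : enclosingLegs (nestPairing hk f₁ f₂) (zeroPos hk) = ∅ := by
  refine Finset.eq_empty_of_forall_notMem fun i hi => ?_
  exact Nat.not_lt_zero _ (mem_enclosingLegs.mp hi).2.1

lemma enclosingLegs_nestPairing_inner (l : Fin (2 * k)) :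
    enclosingLegs (nestPairing hk f₁ f₂) (embInner hk l) =
      insert (zeroPos hk) ((enclosingLegs f₁ l).image (embInner hk)) := by
  ext i
  simp only [mem_enclosingLegs, Finset.mem_insert, Finset.mem_image]
  rcases fin_cases_nest hk i with rfl | rfl | ⟨j, rfl⟩ | ⟨j, rfl⟩ <;>
    simp only [nestPairing_zero, nestPairing_pivot, nestPairing_inner, nestPairing_outer,
      (embInner hk).injective.eq_iff, OrderEmbedding.lt_iff_lt, exists_eq_right] <;>
    simp only [Fin.ext_iff, Fin.lt_def, zeroPos_val, pivotPos_val, embInner_val, embOuter_val] <;>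
    grind

lemma enclosingLegs_nestPairing_outer (l : Fin (2 * (m - k - 1))) :
    enclosingLegs (nestPairing hk f₁ f₂) (embOuter hk l) =
      (enclosingLegs f₂ l).image (embOuter hk) := by
  ext i
  simp only [mem_enclosingLegs, Finset.mem_image]
  rcases fin_cases_nest hk i with rfl | rfl | ⟨j, rfl⟩ | ⟨j, rfl⟩ <;>
    simp only [nestPairing_zero, nestPairing_pivot, nestPairing_inner, nestPairing_outer,
      (embOuter hk).injective.eq_iff, OrderEmbedding.lt_iff_lt, exists_eq_right] <;>
    simp only [Fin.ext_iff, Fin.lt_def, zeroPos_val, pivotPos_val, embInner_val, embOuter_val] <;>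
    grind

variable (q : Fin r)

lemma outerColor_nest_zero :
    outerColor q (nestPairing hk f₁ f₂) (nestColoring hk p g₁ g₂) (zeroPos hk) = q := by
  simp [outerColor_eq, enclosingLegs_nestPairing_zero]

lemma outerColor_nest_inner (l : Fin (2 * k)) :
    outerColor q (nestPairing hk f₁ f₂) (nestColoring hk p g₁ g₂) (embInner hk l) =
      outerColor p f₁ g₁ l := by
  rw [outerColor_eq, outerColor_eq, enclosingLegs_nestPairing_inner,
    dif_pos (Finset.insert_nonempty _ _)]
  by_cases h : (enclosingLegs f₁ l).Nonempty
  · rw [dif_pos h, Finset.max'_insert _ _ (h.image _), Finset.max'_image (embInner hk).monotone,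
      max_eq_right (show zeroPos hk ≤ _ from Nat.zero_le _), nestColoring_inner]
  · rw [dif_neg h, Finset.not_nonempty_iff_eq_empty.mp h, Finset.image_empty]
    simp [nestColoring_zero]

lemma outerColor_nest_outer (l : Fin (2 * (m - k - 1))) :
    outerColor q (nestPairing hk f₁ f₂) (nestColoring hk p g₁ g₂) (embOuter hk l) =
      outerColor q f₂ g₂ l := by
  rw [outerColor_eq, outerColor_eq, enclosingLegs_nestPairing_outer]
  by_cases h : (enclosingLegs f₂ l).Nonempty
  · rw [dif_pos (h.image _), dif_pos h, Finset.max'_image (embOuter hk).monotone,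
      nestColoring_outer]
  · rw [dif_neg (by simpa using h), dif_neg h]

lemma ncWeight_nest (b : Fin r → Fin r → ℝ) :
    ncWeight b q (nestPairing hk f₁ f₂) (nestColoring hk p g₁ g₂) =
      b p q * ncWeight b p f₁ g₁ * ncWeight b q f₂ g₂ := by
  have hzero :
      zeroPos hk ∉ (leftLegs f₁).image (embInner hk) ∪ (leftLegs f₂).image (embOuter hk) := by
    simp [Fin.ext_iff]
  have hdisj :
      Disjoint ((leftLegs f₁).image (embInner hk)) ((leftLegs f₂).image (embOuter hk)) := by
    simp only [Finset.disjoint_left, Finset.mem_image]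
    rintro _ ⟨a, -, rfl⟩ ⟨c, -, h⟩
    simp only [Fin.ext_iff, embInner_val, embOuter_val] at h
    omega
  rw [ncWeight, leftLegs_nestPairing, Finset.prod_insert hzero, Finset.prod_union hdisj,
    Finset.prod_image (embInner hk).injective.injOn,
    Finset.prod_image (embOuter hk).injective.injOn,
    nestColoring_zero, outerColor_nest_zero, mul_assoc]
  simp only [nestColoring_inner, nestColoring_outer, outerColor_nest_inner, outerColor_nest_outer,
    ncWeight]

end Nest

section Unnest

variable {m k : ℕ} (hk : k < m)

lemma range_embInner : Set.range (embInner hk) = Set.Ioo (zeroPos hk) (pivotPos hk) := by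
  ext i
  simp only [Set.mem_range, Set.mem_Ioo, Fin.lt_def, zeroPos_val, pivotPos_val]
  refine ⟨fun ⟨j, hj⟩ => by simp [← hj], fun h => ⟨⟨i - 1, by omega⟩, Fin.ext ?_⟩⟩
  simp only [embInner_val]
  omega

lemma exists_nestPairing_eq {F : Fin (2 * m) → Fin (2 * m)} (hF : IsNCPairing F)
    (hpivot : F (zeroPos hk) = pivotPos hk) :
    ∃ f₁ f₂, IsNCPairing f₁ ∧ IsNCPairing f₂ ∧ nestPairing hk f₁ f₂ = F := by
  have hinner : ∀ j, F (embInner hk j) ∈ Set.range (embInner hk) := fun j => by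
    rw [range_embInner, ← hpivot, IsNCPairing.apply_mem_Ioo_iff hF, hpivot, ← range_embInner]
    exact Set.mem_range_self j
  have houter : ∀ j, F (embOuter hk j) ∈ Set.range (embOuter hk) := fun j => by
    have hj : pivotPos hk < embOuter hk j := by simp [Fin.lt_def]; omega
    rcases fin_cases_nest hk (F (embOuter hk j)) with h | h | ⟨i, h⟩ | ⟨i, h⟩
    · rw [← hF.1 (embOuter hk j), h, hpivot] at hj
      exact absurd hj (lt_irrefl _)
    · rw [← hpivot] at h
      rw [IsNCPairing.injective hF h] at hj
      exact absurd hj (not_lt.mpr (Nat.zero_le _))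
    · have hmem : F (embOuter hk j) ∈ Set.Ioo (zeroPos hk) (F (zeroPos hk)) := by
        rw [h, hpivot, ← range_embInner]
        exact Set.mem_range_self i
      rw [IsNCPairing.apply_mem_Ioo_iff hF, hpivot] at hmem
      exact absurd hmem.2 (not_lt.mpr hj.le)
    · exact ⟨i, h.symm⟩
  choose f₁ hf₁ using hinner
  choose f₂ hf₂ using houter
  refine ⟨f₁, f₂, IsNCPairing.of_orderEmbedding _ hF hf₁, IsNCPairing.of_orderEmbedding _ hF hf₂,
    funext fun i => ?_⟩
  rcases fin_cases_nest hk i with rfl | rfl | ⟨j, rfl⟩ | ⟨j, rfl⟩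
  · rw [nestPairing_zero, hpivot]
  · rw [nestPairing_pivot, ← hpivot, hF.1]
  · rw [nestPairing_inner, hf₁]
  · rw [nestPairing_outer, hf₂]

lemma exists_apply_zeroPos_eq_pivotPos {m : ℕ} (hm : 1 ≤ m) {F : Fin (2 * m) → Fin (2 * m)}
    (hF : IsNCPairing F) : ∃ k, ∃ hk : k < m, F (zeroPos hk) = pivotPos hk := by
  let z : Fin (2 * m) := ⟨0, by omega⟩
  have hz : (F z : ℕ) ≠ 0 := fun h => hF.2.1 z (Fin.ext h)
  obtain ⟨k, hk⟩ : Even ((F z : ℕ) - 0 - 1) := IsNCPairing.even_card_Ioo hF z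
  have hlt := (F z).isLt
  exact ⟨k, by omega, Fin.ext (show (F z : ℕ) = 2 * k + 1 by omega)⟩

lemma nestColoring_eq {F : Fin (2 * m) → Fin (2 * m)} {f₁ : Fin (2 * k) → Fin (2 * k)}
    {f₂ : Fin (2 * (m - k - 1)) → Fin (2 * (m - k - 1))} (hnest : nestPairing hk f₁ f₂ = F)
    {G : Fin (2 * m) → Fin r} (hG : ∀ i, G (F i) = G i) :
    nestColoring hk (G (zeroPos hk)) (G ∘ embInner hk) (G ∘ embOuter hk) = G := by
  funext i
  rcases fin_cases_nest hk i with rfl | rfl | ⟨j, rfl⟩ | ⟨j, rfl⟩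
  · rw [nestColoring_zero]
  · rw [nestColoring_pivot, ← hG, ← hnest, nestPairing_zero]
  · rw [nestColoring_inner, Function.comp_apply]
  · rw [nestColoring_outer, Function.comp_apply]

end Unnest

section PairingSums

variable {b : Fin r → Fin r → ℝ} {q : Fin r}

variable (r) in
def coloredPairings (m : ℕ) :
    Finset ({f : Fin (2 * m) → Fin (2 * m) // IsNCPairing f} × (Fin (2 * m) → Fin r)) :=
  Finset.univ.filter fun x => ∀ i, x.2 (x.1.1 i) = x.2 i

variable (b) in
noncomputable def pairingSum (q : Fin r) (m : ℕ) : ℝ :=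
  ∑ x ∈ coloredPairings r m, ncWeight b q x.1.1 x.2

lemma pairingSum_zero : pairingSum b q 0 = 1 := by
  simp only [pairingSum, coloredPairings, ncWeight, leftLegs, Nat.mul_zero, Finset.univ_eq_empty,
    Finset.filter_empty, Finset.prod_empty, Finset.sum_const, nsmul_eq_mul, mul_one,
    Nat.cast_eq_one, Finset.card_eq_one]
  refine ⟨(⟨id, fun i => i.elim0, fun i => i.elim0, fun i => i.elim0⟩, Fin.elim0),
    Finset.eq_singleton_iff_unique_mem.mpr ⟨by simp, fun x _ => ?_⟩⟩
  exact Prod.ext (Subtype.ext (funext fun i => i.elim0)) (funext fun i => i.elim0)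

lemma pairingSum_rec {m : ℕ} (hm : 1 ≤ m) :
    pairingSum b q m = ∑ p, ∑ k ∈ Finset.range m,
      b p q * pairingSum b p k * pairingSum b q (m - k - 1) := by
  have hflat : ∑ p, ∑ k ∈ Finset.range m, b p q * pairingSum b p k * pairingSum b q (m - k - 1) =
      ∑ x ∈ (Finset.univ : Finset (Fin r × Fin m)).sigma
        (fun pk => coloredPairings r pk.2 ×ˢ coloredPairings r (m - pk.2 - 1)),
        b x.1.1 q * ncWeight b x.1.1 x.2.1.1.1 x.2.1.2 * ncWeight b q x.2.2.1.1 x.2.2.2 := by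
    simp only [Finset.sum_sigma, ← Finset.univ_product_univ, Finset.sum_product, pairingSum,
      Finset.mul_sum, Finset.sum_mul, mul_assoc, Finset.sum_range]
    exact Finset.sum_congr rfl fun p _ => Finset.sum_congr rfl fun k _ => Finset.sum_comm
  rw [hflat, pairingSum]
  symm
  refine Finset.sum_bij (fun x _ =>
    (⟨nestPairing x.1.2.isLt x.2.1.1.1 x.2.2.1.1,
      isNCPairing_nestPairing _ _ _ x.2.1.1.2 x.2.2.1.2⟩,
     nestColoring x.1.2.isLt x.1.1 x.2.1.2 x.2.2.2)) ?_ ?_ ?_ ?_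
  · rintro ⟨⟨p, k⟩, ⟨f₁, g₁⟩, ⟨f₂, g₂⟩⟩ hx
    simp only [Finset.mem_sigma, Finset.mem_product, coloredPairings, Finset.mem_filter,
      Finset.mem_univ, true_and] at hx ⊢
    exact nestColoring_comp_nestPairing _ _ _ _ _ _ hx.1 hx.2
  · rintro ⟨⟨p, k⟩, ⟨⟨f₁, _⟩, g₁⟩, ⟨⟨f₂, _⟩, g₂⟩⟩ _
      ⟨⟨p', k'⟩, ⟨⟨f₁', _⟩, g₁'⟩, ⟨⟨f₂', _⟩, g₂'⟩⟩ _ he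
    simp only [Prod.mk.injEq, Subtype.mk.injEq] at he
    obtain ⟨hf, hg⟩ := he
    obtain rfl : k = k' := by
      have := congrFun hf (zeroPos k.isLt)
      rw [nestPairing_zero, show zeroPos k.isLt = zeroPos k'.isLt from rfl, nestPairing_zero,
        Fin.ext_iff, pivotPos_val, pivotPos_val] at this
      exact Fin.ext (by omega)
    obtain ⟨rfl, rfl⟩ := nestPairing_inj _ _ _ hf
    obtain ⟨rfl, rfl, rfl⟩ := nestColoring_inj _ _ _ _ hg
    rfl
  · rintro ⟨⟨F, hF⟩, G⟩ hG
    replace hG : ∀ i, G (F i) = G i := by simpa [coloredPairings] using hG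
    obtain ⟨k, hk, hpivot⟩ := exists_apply_zeroPos_eq_pivotPos hm hF
    obtain ⟨f₁, f₂, hf₁, hf₂, hnest⟩ := exists_nestPairing_eq hk hF hpivot
    have hcol := nestColoring_eq hk hnest hG
    refine ⟨⟨(G (zeroPos hk), ⟨k, hk⟩), (⟨f₁, hf₁⟩, G ∘ embInner hk), (⟨f₂, hf₂⟩, G ∘ embOuter hk)⟩,
      ?_, ?_⟩
    · simp only [Finset.mem_sigma, Finset.mem_product, coloredPairings, Finset.mem_filter,
        Finset.mem_univ, true_and, Function.comp_apply]
      refine ⟨fun j => ?_, fun j => ?_⟩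
      · rw [← nestPairing_inner hk f₁ f₂, hnest, hG]
      · rw [← nestPairing_outer hk f₁ f₂, hnest, hG]
    · simp only [Prod.mk.injEq, Subtype.mk.injEq]
      exact ⟨hnest, hcol⟩
  · rintro x hx
    exact (ncWeight_nest _ _ _ _ _ _ _ _).symm

lemma pairingSum_eq (q : Fin r) (m : ℕ) :
    pairingSum b q m = ∑ π : {f : Fin (2 * m) → Fin (2 * m) // IsNCPairing f},
      ∑ g : Fin (2 * m) → Fin r, if ∀ i, g (π.1 i) = g i then ncWeight b q π.1 g else 0 := by
  rw [pairingSum, coloredPairings, Finset.sum_filter, ← Finset.univ_product_univ,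
    Finset.sum_product]

lemma closedPathSum_eq_pairingSum (hb : ∀ i j, 0 ≤ b i j) (m : ℕ) (q : Fin r) :
    closedPathSum b q (2 * m) = pairingSum b q m := by
  induction m using Nat.strong_induction_on generalizing q with
  | _ m ih =>
    rcases Nat.eq_zero_or_pos m with rfl | hm
    · rw [Nat.mul_zero, closedPathSum_zero, pairingSum_zero]
    rw [closedPathSum_rec hb hm, pairingSum_rec hm]
    refine Finset.sum_congr rfl fun p _ => Finset.sum_congr rfl fun k hk => ?_
    have hk := Finset.mem_range.mp hk
    rw [ih k hk, show 2 * m - 2 * k - 2 = 2 * (m - k - 1) by omega, ih (m - k - 1) (by omega)]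

end PairingSums

section Operators

variable {H : Type*} [NormedAddCommGroup H] [InnerProductSpace ℂ H]
  {b : Fin r → Fin r → ℝ} {e : Fin r × List (Fin r) → H}

lemma pow_apply_basis {ω : H →L[ℂ] H} (hω : ∀ q s, ω (e (q, s)) = ∑ mv : Option (Fin r),
      (pathWeight b q s [mv] : ℂ) • (finalStack s [mv]).elim 0 (fun s' => e (q, s')))
    (n : ℕ) (q : Fin r) (s : List (Fin r)) :
    (ω ^ n) (e (q, s)) = ∑ ms ∈ listsOfLength _ n,
      (pathWeight b q s ms : ℂ) • (finalStack s ms).elim 0 (fun s' => e (q, s')) := by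
  induction n generalizing s with
  | zero => simp [listsOfLength]
  | succ n ih =>
    rw [pow_succ, mul_apply_eq_comp, hω, map_sum, listsOfLength,
      Finset.sum_image fun x _ y _ h => by simpa [Prod.ext_iff] using h, Finset.sum_product]
    refine Finset.sum_congr rfl fun mv _ => ?_
    rw [map_smul]
    rcases h : finalStack s [mv] with _ | s'
    · have hstack (ms : List (Option (Fin r))) : finalStack s (mv :: ms) = none := by
        rw [← List.singleton_append, finalStack_append, h, Option.bind_none]
      simp [hstack]
    · have hstack (ms : List (Option (Fin r))) : finalStack s (mv :: ms) = finalStack s' ms := by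
        rw [← List.singleton_append, finalStack_append, h, Option.bind_some]
      have hweight (ms : List (Option (Fin r))) :
          pathWeight b q s (mv :: ms) = pathWeight b q s [mv] * pathWeight b q s' ms :=
        pathWeight_append ms h
      simp only [Option.elim_some, ih, Finset.smul_sum, smul_smul]
      refine Finset.sum_congr rfl fun ms _ => ?_
      rw [hstack, hweight ms, Complex.ofReal_mul]

lemma inner_pow_apply_vacuum (he : Orthonormal ℂ e) {ω : H →L[ℂ] H}
    (hω : ∀ q s, ω (e (q, s)) = ∑ mv : Option (Fin r),
      (pathWeight b q s [mv] : ℂ) • (finalStack s [mv]).elim 0 (fun s' => e (q, s')))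
    (n : ℕ) (q : Fin r) :
    ⟪e (q, []), (ω ^ n) (e (q, []))⟫_ℂ = closedPathSum b q n := by
  classical
  rw [pow_apply_basis hω, inner_sum, closedPathSum, closedPaths, Finset.sum_filter,
    Complex.ofReal_sum]
  refine Finset.sum_congr rfl fun ms _ => ?_
  rcases h : finalStack [] ms with _ | s'
  · simp
  · simp only [Option.elim_some, inner_smul_right, orthonormal_iff_ite.mp he, Prod.mk.injEq,
      true_and, Option.some.injEq, eq_comm (a := s')]
    split_ifs <;> simp

variable [CompleteSpace H] (he : Orthonormal ℂ e)
  (hdense : (Submodule.span ℂ (Set.range e)).topologicalClosure = ⊤)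
  {c : Fin r → Fin r → H →L[ℂ] H}
  (hc : ∀ i j x, c i j (e x) =
    if actsOn j x then (Real.sqrt (b i j) : ℂ) • e (x.1, i :: x.2) else 0)
include he hdense hc

lemma adjoint_apply_vacuum (i j p : Fin r) : adjoint (c i j) (e (p, [])) = 0 := by
  classical
  refine ext_inner_of_dense_span hdense fun y => ?_
  rw [ContinuousLinearMap.adjoint_inner_right, hc, inner_zero_right]
  split_ifs
  · rw [inner_smul_left, orthonormal_iff_ite.mp he, if_neg (by simp), mul_zero]
  · rw [inner_zero_left]

lemma adjoint_apply_cons (i j p a : Fin r) (t : List (Fin r)) :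
    adjoint (c i j) (e (p, a :: t)) =
      if a = i ∧ actsOn j (p, t) then (Real.sqrt (b i j) : ℂ) • e (p, t) else 0 := by
  classical
  refine ext_inner_of_dense_span hdense fun y => ?_
  rw [ContinuousLinearMap.adjoint_inner_right, hc]
  have hinner := orthonormal_iff_ite.mp he
  split_ifs with hy hai <;>
    simp only [inner_smul_left, inner_smul_right, inner_zero_left, inner_zero_right, hinner,
      Complex.conj_ofReal, Prod.ext_iff, List.cons.injEq] <;>
    grind

lemma gaussian_apply_basis (q : Fin r) (s : List (Fin r)) :
    (∑ i, ∑ j, (c i j + adjoint (c i j))) (e (q, s)) =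
      ∑ mv : Option (Fin r),
        (pathWeight b q s [mv] : ℂ) • (finalStack s [mv]).elim 0 (fun s' => e (q, s')) := by
  classical
  have hcreate : ∑ i, ∑ j, c i j (e (q, s)) = ∑ i, (√(b i (s.headD q)) : ℂ) • e (q, i :: s) := by
    simp only [hc, actsOn_iff, Finset.sum_ite_eq', Finset.mem_univ, if_true]
  have hannihilate : ∑ i, ∑ j, adjoint (c i j) (e (q, s)) =
      (pathWeight b q s [none] : ℂ) • (finalStack s [none]).elim 0 (fun s' => e (q, s')) := by
    cases s with
    | nil => simp [adjoint_apply_vacuum he hdense hc]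
    | cons a t =>
      simp [adjoint_apply_cons he hdense hc, actsOn_iff, ite_and]
  rw [sum_apply]
  simp only [sum_apply, add_apply, Finset.sum_add_distrib, hcreate, hannihilate,
    Fintype.sum_option]
  rw [add_comm]
  simp

end Operators

end MatriciallyFree

open MatriciallyFree in
/-- The moments of `ω = ∑_{p,q} ω_{p,q}` satisfy the recurrence
`Ψ_q(ω^{2m}) = ∑_p ∑_{k=0}^{m-1} b_{p,q} Ψ_p(ω^{2k}) Ψ_q(ω^{2m-2k-2})`, with
`Ψ_q(ω⁰) = 1` and vanishing odd moments, and consequently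
`Ψ_q(ω^{2m}) = ∑_{(π,f) ∈ NC²_{2m,q}[r]} b_q(π,f)`, the sum being over noncrossing pair
partitions of `[2m]` with blocks colored by `[r]` and the imaginary block colored by `q`. -/
theorem stmt11 {H : Type} [NormedAddCommGroup H] [InnerProductSpace ℂ H] [CompleteSpace H]
    (r : ℕ) (b : Fin r → Fin r → ℝ) (hb : ∀ i j, 0 ≤ b i j)
    (e : Fin r × List (Fin r) → H) (he : Orthonormal ℂ e)
    (hdense : (Submodule.span ℂ (Set.range e)).topologicalClosure = ⊤)
    (c : Fin r → Fin r → H →L[ℂ] H)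
    (hc : ∀ i j x, c i j (e x) =
      if actsOn j x then (Real.sqrt (b i j) : ℂ) • e (x.1, i :: x.2) else 0)
    (om : H →L[ℂ] H) (hom : om = ∑ i, ∑ j, (c i j + adjoint (c i j)))
    (Psi : Fin r → (H →L[ℂ] H) → ℂ)
    (hPsi : ∀ q X, Psi q X =
      @inner ℂ H _ (e (q, ([] : List (Fin r)))) (X (e (q, [])))) :
    (∀ (q : Fin r) (m : ℕ), 1 ≤ m →
      Psi q (om ^ (2 * m)) = ∑ p, ∑ k ∈ Finset.range m,
        ((b p q : ℝ) : ℂ) * Psi p (om ^ (2 * k)) * Psi q (om ^ (2 * m - 2 * k - 2))) ∧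
    (∀ q : Fin r, Psi q (om ^ 0) = 1) ∧
    (∀ (q : Fin r) (m : ℕ), Odd m → Psi q (om ^ m) = 0) ∧
    (∀ (q : Fin r) (m : ℕ),
      Psi q (om ^ (2 * m)) =
        ((∑ π : {f : Fin (2 * m) → Fin (2 * m) // IsNCPairing f},
          ∑ g : Fin (2 * m) → Fin r,
            if ∀ i, g (π.1 i) = g i then ncWeight b q π.1 g else 0 : ℝ) : ℂ)) := by
  have hmoment (q : Fin r) (n : ℕ) : Psi q (om ^ n) = closedPathSum b q n := by
    rw [hPsi, inner_pow_apply_vacuum he (hom ▸ gaussian_apply_basis he hdense hc)]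
  refine ⟨fun q m hm => ?_, fun q => ?_, fun q m hm => ?_, fun q m => ?_⟩
  · simp only [hmoment, closedPathSum_rec hb hm]
    push_cast
    rfl
  · rw [hmoment, closedPathSum_zero, Complex.ofReal_one]
  · rw [hmoment, closedPathSum_of_odd hm, Complex.ofReal_zero]
  · rw [hmoment, closedPathSum_eq_pairingSum hb, pairingSum_eq]
end
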